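/- arXiv:2305.07277 — 4 statements merged into one kernel-verified Lean document; each statement's English description precedes it below -/
import Mathlib

section
/- Let N ≥ 3, let ν₁ < ν₂ < ⋯ < ν_N be positive integers, and let a₁, …, a_N be nonzero complex numbers. Fix n with 1 < n < N and set Λ_n = min_{m ≠ n} |ν_m − ν_n|. For α ∈ [0,1] define B_{n,α} = π^{α−1}(1−α²)Λ_n / (Λ_n^{1−α} − (1/5)^{1−α}) when α < 1, and B_{n,1} = 2Λ_n / log(5Λ_n). Then for each α ∈ [0,1], the set of x ∈ [−1/2, 1/2] satisfying |∑_{k=1}^N a_k sin(2π ν_k x)| > (1/4) B_{n,α} |a_n| |x|^α has positive Lebesgue measure. -/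
open Real MeasureTheory

lemma E_int (m : ℤ) :
    (∫ x in (-(1/2) : ℝ)..(1/2 : ℝ), Complex.exp (2*π*Complex.I*m*x))
      = if m = 0 then 1 else 0 := by
  rcases eq_or_ne m 0 with hm | hm
  · simp [hm]; norm_num
  · rw [if_neg hm]
    have hc : (2*π*Complex.I*m : ℂ) ≠ 0 := by
      simp [Real.pi_ne_zero, Complex.I_ne_zero, hm, Complex.ofReal_ne_zero]
    have := integral_exp_mul_complex (a := (-(1/2):ℝ)) (b := (1/2:ℝ)) hc
    rw [show (fun x : ℝ => Complex.exp (2*π*Complex.I*m*x)) = fun x : ℝ => Complex.exp ((2*π*Complex.I*m)*x) by rfl] at this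
    rw [this]
    have h1 : (2*π*Complex.I*m) * ((1:ℝ):ℂ)/2 = m * (π * Complex.I) := by push_cast; ring
    have e1 : Complex.exp ((2*π*Complex.I*m) * ((1/2:ℝ):ℂ)) = (Complex.exp (π * Complex.I))^m := by
      rw [← Complex.exp_int_mul]; congr 1; push_cast; ring
    have e2 : Complex.exp ((2*π*Complex.I*m) * ((-(1/2):ℝ):ℂ)) = (Complex.exp (π * Complex.I))^(-m) := by
      rw [← Complex.exp_int_mul]; congr 1; push_cast; ring
    rw [e1, e2, Complex.exp_pi_mul_I]
    have : ((-1 : ℂ))^(-m) = (-1)^m := by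
      rw [zpow_neg]
      rcases Int.even_or_odd m with he | ho
      · rw [he.neg_one_zpow]; norm_num
      · rw [ho.neg_one_zpow]; norm_num
    rw [this, sub_self, zero_div]


lemma exp_integrable (l : ℤ) :
    IntervalIntegrable (fun x : ℝ => Complex.exp (2*π*Complex.I*l*x))
      volume (-(1/2)) (1/2) := by
  apply Continuous.intervalIntegrable
  fun_prop

lemma sin_sin_exp_int (p q : ℕ) (m : ℤ) :
    (∫ x in (-(1/2) : ℝ)..(1/2 : ℝ),
      ((Real.sin (2*π*p*x) : ℂ) * (Real.sin (2*π*q*x) : ℂ) * Complex.exp (2*π*Complex.I*m*x)))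
      = -(1/4) * (((if (p:ℤ)+q+m = 0 then 1 else 0) : ℂ)
          - (if (p:ℤ)-q+m = 0 then 1 else 0)
          - (if (q:ℤ)-p+m = 0 then 1 else 0)
          + (if m-(p:ℤ)-q = 0 then 1 else 0)) := by
  have hpt : ∀ x : ℝ,
      ((Real.sin (2*π*p*x) : ℂ) * (Real.sin (2*π*q*x) : ℂ) * Complex.exp (2*π*Complex.I*m*x))
      = -(1/4) * (Complex.exp (2*π*Complex.I*(((p:ℤ)+q+m : ℤ) : ℂ)*x)
          - Complex.exp (2*π*Complex.I*(((p:ℤ)-q+m : ℤ) : ℂ)*x)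
          - Complex.exp (2*π*Complex.I*(((q:ℤ)-p+m : ℤ) : ℂ)*x)
          + Complex.exp (2*π*Complex.I*((m-(p:ℤ)-q : ℤ) : ℂ)*x)) := by
    intro x
    rw [Complex.ofReal_sin, Complex.ofReal_sin, Complex.sin, Complex.sin]
    have e1 : Complex.exp (2*π*Complex.I*(((p:ℤ)+q+m : ℤ) : ℂ)*x)
        = Complex.exp (((2*π*p*x : ℝ) : ℂ)*Complex.I) * Complex.exp (((2*π*q*x : ℝ) : ℂ)*Complex.I)
          * Complex.exp (2*π*Complex.I*m*x) := by
      rw [← Complex.exp_add, ← Complex.exp_add]; congr 1; push_cast; ring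
    have e2 : Complex.exp (2*π*Complex.I*(((p:ℤ)-q+m : ℤ) : ℂ)*x)
        = Complex.exp (((2*π*p*x : ℝ) : ℂ)*Complex.I) * Complex.exp (-((2*π*q*x : ℝ) : ℂ)*Complex.I)
          * Complex.exp (2*π*Complex.I*m*x) := by
      rw [← Complex.exp_add, ← Complex.exp_add]; congr 1; push_cast; ring
    have e3 : Complex.exp (2*π*Complex.I*(((q:ℤ)-p+m : ℤ) : ℂ)*x)
        = Complex.exp (-((2*π*p*x : ℝ) : ℂ)*Complex.I) * Complex.exp (((2*π*q*x : ℝ) : ℂ)*Complex.I)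
          * Complex.exp (2*π*Complex.I*m*x) := by
      rw [← Complex.exp_add, ← Complex.exp_add]; congr 1; push_cast; ring
    have e4 : Complex.exp (2*π*Complex.I*((m-(p:ℤ)-q : ℤ) : ℂ)*x)
        = Complex.exp (-((2*π*p*x : ℝ) : ℂ)*Complex.I) * Complex.exp (-((2*π*q*x : ℝ) : ℂ)*Complex.I)
          * Complex.exp (2*π*Complex.I*m*x) := by
      rw [← Complex.exp_add, ← Complex.exp_add]; congr 1; push_cast; ring
    rw [e1, e2, e3, e4]
    ring_nf
    simp only [Complex.I_sq]
    ring
  rw [intervalIntegral.integral_congr (g := fun x => -(1/4) * (Complex.exp (2*π*Complex.I*(((p:ℤ)+q+m : ℤ) : ℂ)*x)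
          - Complex.exp (2*π*Complex.I*(((p:ℤ)-q+m : ℤ) : ℂ)*x)
          - Complex.exp (2*π*Complex.I*(((q:ℤ)-p+m : ℤ) : ℂ)*x)
          + Complex.exp (2*π*Complex.I*((m-(p:ℤ)-q : ℤ) : ℂ)*x))) (fun x _ => hpt x)]
  rw [intervalIntegral.integral_const_mul]
  rw [intervalIntegral.integral_add (((exp_integrable _).sub (exp_integrable _)).sub (exp_integrable _)) (exp_integrable _),
      intervalIntegral.integral_sub ((exp_integrable _).sub (exp_integrable _)) (exp_integrable _),
      intervalIntegral.integral_sub (exp_integrable _) (exp_integrable _)]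
  rw [E_int, E_int, E_int, E_int]


noncomputable def Dker (L : ℕ) (x : ℝ) : ℂ :=
  ∑ j ∈ Finset.range L, Complex.exp (2*π*Complex.I*j*x)

lemma kernel_expand (L : ℕ) (x : ℝ) :
    Dker L x * (starRingEnd ℂ) (Dker L x)
      = ∑ z ∈ Finset.range L ×ˢ Finset.range L,
          Complex.exp (2*π*Complex.I*(((z.1:ℤ)-(z.2:ℤ) : ℤ) : ℂ)*x) := by
  unfold Dker
  rw [map_sum, Finset.sum_mul_sum, Finset.sum_product]
  refine Finset.sum_congr rfl (fun j _ => Finset.sum_congr rfl (fun j' _ => ?_))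
  rw [← Complex.exp_conj, ← Complex.exp_add]
  congr 1
  simp only [map_mul, Complex.conj_I, Complex.conj_ofReal, map_ofNat, Complex.conj_natCast]
  push_cast
  ring


lemma sse_integrable (p q : ℕ) (m : ℤ) :
    IntervalIntegrable (fun x : ℝ =>
      (Real.sin (2*π*p*x) : ℂ) * (Real.sin (2*π*q*x) : ℂ) * Complex.exp (2*π*Complex.I*m*x))
      volume (-(1/2)) (1/2) := by
  apply Continuous.intervalIntegrable
  fun_prop

lemma kernel_int_expand (p q L : ℕ) :
    (∫ x in (-(1/2) : ℝ)..(1/2 : ℝ),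
      ((Real.sin (2*π*p*x) : ℂ) * (Real.sin (2*π*q*x) : ℂ)
        * (Dker L x * (starRingEnd ℂ) (Dker L x))))
      = ∑ z ∈ Finset.range L ×ˢ Finset.range L,
          (-(1/4) * (((if (p:ℤ)+q+((z.1:ℤ)-(z.2:ℤ)) = 0 then 1 else 0) : ℂ)
          - (if (p:ℤ)-q+((z.1:ℤ)-(z.2:ℤ)) = 0 then 1 else 0)
          - (if (q:ℤ)-p+((z.1:ℤ)-(z.2:ℤ)) = 0 then 1 else 0)
          + (if ((z.1:ℤ)-(z.2:ℤ))-(p:ℤ)-q = 0 then 1 else 0))) := by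
  have hpt : ∀ x : ℝ,
      ((Real.sin (2*π*p*x) : ℂ) * (Real.sin (2*π*q*x) : ℂ)
        * (Dker L x * (starRingEnd ℂ) (Dker L x)))
      = ∑ z ∈ Finset.range L ×ˢ Finset.range L,
          ((Real.sin (2*π*p*x) : ℂ) * (Real.sin (2*π*q*x) : ℂ)
            * Complex.exp (2*π*Complex.I*(((z.1:ℤ)-(z.2:ℤ) : ℤ) : ℂ)*x)) := by
    intro x
    rw [kernel_expand, Finset.mul_sum]
  simp only [hpt]
  rw [intervalIntegral.integral_finset_sum
    (f := fun (z : ℕ × ℕ) (x : ℝ) => (Real.sin (2*π*p*x) : ℂ) * (Real.sin (2*π*q*x) : ℂ)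
      * Complex.exp (2*π*Complex.I*(((z.1:ℤ)-(z.2:ℤ) : ℤ) : ℂ)*x))
    (fun z _ => sse_integrable p q ((z.1:ℤ)-(z.2:ℤ)))]
  exact Finset.sum_congr rfl (fun z _ => sin_sin_exp_int p q _)


lemma int_kernel_ne (p q L : ℕ) (hsum : (L:ℤ) ≤ (p:ℤ)+(q:ℤ))
    (hdiff : (L:ℤ) ≤ |(p:ℤ)-(q:ℤ)|) :
    (∫ x in (-(1/2) : ℝ)..(1/2 : ℝ),
      ((Real.sin (2*π*p*x) : ℂ) * (Real.sin (2*π*q*x) : ℂ)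
        * (Dker L x * (starRingEnd ℂ) (Dker L x)))) = 0 := by
  rw [kernel_int_expand]
  apply Finset.sum_eq_zero
  intro z hz
  rw [Finset.mem_product, Finset.mem_range, Finset.mem_range] at hz
  have hj1 : (z.1:ℤ) < L := by exact_mod_cast hz.1
  have hj2 : (z.2:ℤ) < L := by exact_mod_cast hz.2
  have hz1 : (0:ℤ) ≤ z.1 := Int.natCast_nonneg _
  have hz2 : (0:ℤ) ≤ z.2 := Int.natCast_nonneg _
  rcases abs_cases ((p:ℤ)-(q:ℤ)) with ⟨h1, h2⟩ | ⟨h1, h2⟩ <;>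
  · rw [if_neg (by omega), if_neg (by omega), if_neg (by omega), if_neg (by omega)]
    norm_num

lemma int_kernel_eq (p L : ℕ) (hsum : (L:ℤ) ≤ 2*(p:ℤ)) :
    (∫ x in (-(1/2) : ℝ)..(1/2 : ℝ),
      ((Real.sin (2*π*p*x) : ℂ) * (Real.sin (2*π*p*x) : ℂ)
        * (Dker L x * (starRingEnd ℂ) (Dker L x)))) = (L:ℂ)/2 := by
  rw [kernel_int_expand]
  have step : ∀ z ∈ Finset.range L ×ˢ Finset.range L,
      (-(1/4) * (((if (p:ℤ)+p+((z.1:ℤ)-(z.2:ℤ)) = 0 then 1 else 0) : ℂ)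
          - (if (p:ℤ)-p+((z.1:ℤ)-(z.2:ℤ)) = 0 then 1 else 0)
          - (if (p:ℤ)-p+((z.1:ℤ)-(z.2:ℤ)) = 0 then 1 else 0)
          + (if ((z.1:ℤ)-(z.2:ℤ))-(p:ℤ)-p = 0 then 1 else 0)))
        = (if z.1 = z.2 then (1/2 : ℂ) else 0) := by
    intro z hz
    rw [Finset.mem_product, Finset.mem_range, Finset.mem_range] at hz
    have hj1 : (z.1:ℤ) < L := by exact_mod_cast hz.1
    have hj2 : (z.2:ℤ) < L := by exact_mod_cast hz.2
    have hz1 : (0:ℤ) ≤ z.1 := Int.natCast_nonneg _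
    have hz2 : (0:ℤ) ≤ z.2 := Int.natCast_nonneg _
    rw [if_neg (show ¬((p:ℤ)+p+((z.1:ℤ)-(z.2:ℤ)) = 0) by omega),
        if_neg (show ¬(((z.1:ℤ)-(z.2:ℤ))-(p:ℤ)-p = 0) by omega)]
    by_cases h : z.1 = z.2
    · rw [if_pos (show (p:ℤ)-p+((z.1:ℤ)-(z.2:ℤ)) = 0 by omega), if_pos h]; norm_num
    · rw [if_neg (show ¬((p:ℤ)-p+((z.1:ℤ)-(z.2:ℤ)) = 0) by omega), if_neg h]; norm_num
  rw [Finset.sum_congr rfl step, Finset.sum_product]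
  have inner : ∀ j ∈ Finset.range L,
      (∑ j' ∈ Finset.range L, if j = j' then (1/2 : ℂ) else 0) = (1/2 : ℂ) := by
    intro j hj
    rw [Finset.sum_ite_eq (Finset.range L) j (fun _ => (1/2:ℂ)), if_pos hj]
  rw [Finset.sum_congr rfl inner, Finset.sum_const, Finset.card_range]
  simp
  ring


lemma cont_Dker (L : ℕ) : Continuous (fun x => Dker L x) := by
  unfold Dker
  exact continuous_finset_sum _ (fun j _ => by fun_prop)

lemma main_identity (N : ℕ) (ν : Fin N → ℕ) (a : Fin N → ℂ) (n : Fin N) (L : ℕ)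
    (hsum : ∀ k, (L:ℤ) ≤ (ν k : ℤ) + (ν n : ℤ))
    (hdiff : ∀ k, k ≠ n → (L:ℤ) ≤ |(ν k : ℤ) - (ν n : ℤ)|) :
    (∫ x in (-(1/2) : ℝ)..(1/2 : ℝ),
      ((∑ k : Fin N, a k * (Real.sin (2*π*(ν k)*x) : ℂ))
        * ((Real.sin (2*π*(ν n)*x) : ℂ) * (Dker L x * (starRingEnd ℂ) (Dker L x)))))
      = a n * ((L:ℂ)/2) := by
  have hpt : ∀ x : ℝ,
      ((∑ k : Fin N, a k * (Real.sin (2*π*(ν k)*x) : ℂ))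
        * ((Real.sin (2*π*(ν n)*x) : ℂ) * (Dker L x * (starRingEnd ℂ) (Dker L x))))
      = ∑ k : Fin N, a k * ((Real.sin (2*π*(ν k)*x) : ℂ) * (Real.sin (2*π*(ν n)*x) : ℂ)
          * (Dker L x * (starRingEnd ℂ) (Dker L x))) := by
    intro x
    rw [Finset.sum_mul]
    exact Finset.sum_congr rfl (fun k _ => by ring)
  have hint : ∀ k : Fin N, IntervalIntegrable
      (fun x : ℝ => a k * ((Real.sin (2*π*(ν k)*x) : ℂ) * (Real.sin (2*π*(ν n)*x) : ℂ)
          * (Dker L x * (starRingEnd ℂ) (Dker L x)))) volume (-(1/2)) (1/2) := by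
    intro k
    apply Continuous.intervalIntegrable
    apply Continuous.mul continuous_const
    apply Continuous.mul
    · fun_prop
    · exact ((cont_Dker L).mul ((Complex.continuous_conj).comp (cont_Dker L)))
  simp only [hpt]
  rw [intervalIntegral.integral_finset_sum (fun k _ => hint k)]
  have hterm : ∀ k : Fin N,
      (∫ x in (-(1/2) : ℝ)..(1/2 : ℝ), a k * ((Real.sin (2*π*(ν k)*x) : ℂ)
        * (Real.sin (2*π*(ν n)*x) : ℂ) * (Dker L x * (starRingEnd ℂ) (Dker L x))))
      = a k * (∫ x in (-(1/2) : ℝ)..(1/2 : ℝ), ((Real.sin (2*π*(ν k)*x) : ℂ)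
        * (Real.sin (2*π*(ν n)*x) : ℂ) * (Dker L x * (starRingEnd ℂ) (Dker L x)))) :=
    fun k => intervalIntegral.integral_const_mul _ _
  simp only [hterm]
  rw [Finset.sum_eq_single n]
  · rw [int_kernel_eq (ν n) L (by have := hsum n; omega)]
  · intro k _ hk
    rw [int_kernel_ne (ν k) (ν n) L (hsum k) (hdiff k hk), mul_zero]
  · intro h
    exact absurd (Finset.mem_univ n) h


lemma Dker_norm_le (L : ℕ) (x : ℝ) : ‖Dker L x‖ ≤ L := by
  unfold Dker
  calc ‖∑ j ∈ Finset.range L, Complex.exp (2*π*Complex.I*j*x)‖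
      ≤ ∑ j ∈ Finset.range L, ‖Complex.exp (2*π*Complex.I*j*x)‖ := norm_sum_le _ _
    _ = ∑ j ∈ Finset.range L, 1 := by
        refine Finset.sum_congr rfl (fun j _ => ?_)
        rw [show (2*π*Complex.I*j*x : ℂ) = ((2*π*j*x : ℝ) : ℂ) * Complex.I by push_cast; ring]
        rw [Complex.norm_exp_ofReal_mul_I]
    _ = L := by simp

lemma Dker_neg (L : ℕ) (x : ℝ) : Dker L (-x) = (starRingEnd ℂ) (Dker L x) := by
  unfold Dker
  rw [map_sum]
  refine Finset.sum_congr rfl (fun j _ => ?_)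
  rw [← Complex.exp_conj]
  congr 1
  simp only [map_mul, Complex.conj_I, Complex.conj_ofReal, map_ofNat, Complex.conj_natCast]
  push_cast
  ring

lemma two_abs_le_sin (x : ℝ) (hx2 : |x| ≤ 1/2) : 2*|x| ≤ |Real.sin (π * x)| := by
  have h1 : Real.sin (π * |x|) = |Real.sin (π * x)| := by
    rcases abs_cases x with ⟨h, hs⟩ | ⟨h, hs⟩
    · rw [h, abs_of_nonneg]
      apply Real.sin_nonneg_of_nonneg_of_le_pi
      · positivity
      · nlinarith [Real.pi_pos, abs_nonneg x, hx2, h]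
    · rw [h, mul_neg, Real.sin_neg, abs_of_nonpos]
      apply Real.sin_nonpos_of_nonpos_of_neg_pi_le
      · nlinarith [Real.pi_pos]
      · nlinarith [Real.pi_pos, hx2, h]
  rw [← h1]
  have := Real.mul_le_sin (x := π * |x|) (by positivity)
    (by nlinarith [Real.pi_pos, hx2, abs_nonneg x])
  calc 2*|x| = 2/π * (π * |x|) := by field_simp
    _ ≤ Real.sin (π * |x|) := this

lemma Dker_norm_le_inv (L : ℕ) (x : ℝ) (hx : 0 < |x|) (hx2 : |x| ≤ 1/2) :
    ‖Dker L x‖ ≤ 1/(2*|x|) := by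
  set r : ℂ := Complex.exp (2*π*Complex.I*x) with hr
  have hrj : ∀ j : ℕ, Complex.exp (2*π*Complex.I*j*x) = r ^ j := by
    intro j
    rw [hr, ← Complex.exp_nat_mul]
    congr 1
    push_cast; ring
  have h1 : Complex.exp (((π*x : ℝ):ℂ)*Complex.I) * Complex.exp (((π*x : ℝ):ℂ)*Complex.I) = r := by
    rw [hr, ← Complex.exp_add]; congr 1; push_cast; ring
  have h2 : Complex.exp (((π*x : ℝ):ℂ)*Complex.I) * Complex.exp (-((π*x : ℝ):ℂ)*Complex.I) = 1 := by
    rw [← Complex.exp_add,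
      show (((π*x:ℝ):ℂ)*Complex.I + -((π*x:ℝ):ℂ)*Complex.I) = 0 by ring]
    exact Complex.exp_zero
  have hrne : r ≠ 1 := by
    intro h
    rw [hr, Complex.exp_eq_one_iff] at h
    obtain ⟨m, hm⟩ := h
    have hx_eq : (x : ℂ) = (m : ℂ) := by
      have hne : (2*(π:ℂ)*Complex.I) ≠ 0 :=
        mul_ne_zero (mul_ne_zero two_ne_zero (Complex.ofReal_ne_zero.mpr Real.pi_ne_zero))
          Complex.I_ne_zero
      apply mul_left_cancel₀ hne
      linear_combination hm
    have hx_real : x = (m : ℝ) := by exact_mod_cast hx_eq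
    rcases eq_or_ne m 0 with h0 | h0
    · rw [h0] at hx_real; simp [hx_real] at hx
    · have : (1:ℝ) ≤ |x| := by
        rw [hx_real, ← Int.cast_abs]
        exact_mod_cast Int.one_le_abs h0
      linarith
  have hgeom : Dker L x = (r ^ L - 1)/(r - 1) := by
    unfold Dker
    simp only [hrj]
    exact geom_sum_eq hrne L
  have habs_r : ‖r‖ = 1 := by
    rw [hr, show (2*π*Complex.I*x : ℂ) = ((2*π*x : ℝ) : ℂ) * Complex.I by push_cast; ring]
    exact Complex.norm_exp_ofReal_mul_I _
  have hnum : ‖r ^ L - 1‖ ≤ 2 := by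
    calc ‖r ^ L - 1‖ ≤ ‖r ^ L‖ + ‖(1:ℂ)‖ := norm_sub_le _ _
      _ = 1 + 1 := by rw [norm_pow, habs_r, one_pow, norm_one]
      _ = 2 := by norm_num
  have key : r - 1 = Complex.exp (((π*x : ℝ):ℂ)*Complex.I)
      * (2*Complex.I*Complex.sin ((π*x : ℝ):ℂ)) := by
    rw [Complex.sin]
    linear_combination Complex.I^2 * h1 - Complex.I^2 * h2 + (r-1) * Complex.I_sq
  have hden : ‖r - 1‖ = 2 * |Real.sin (π * x)| := by
    rw [key, ← Complex.ofReal_sin]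
    simp only [norm_mul, Complex.norm_exp_ofReal_mul_I, Complex.norm_I,
      Complex.norm_real, Real.norm_eq_abs, Complex.norm_two]
    ring
  have hsin := two_abs_le_sin x hx2
  rw [hgeom, norm_div, hden]
  calc ‖r ^ L - 1‖ / (2 * |Real.sin (π * x)|) ≤ 2 / (4 * |x|) := by
        apply div_le_div₀ (by norm_num) hnum (by positivity) (by linarith)
    _ = 1/(2*|x|) := by ring


lemma J_bound (L : ℕ) (hL : 1 ≤ L) (α : ℝ) (h0 : 0 ≤ α) (h1 : α ≤ 1) :
    (∫ x in (-(1/2):ℝ)..(1/2:ℝ), |x|^α * ‖Dker L x‖^2)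
      ≤ 2*((L:ℝ)^2 * (1/(2*(L:ℝ)))^(α+1)/(α+1)
          + (∫ x in (1/(2*(L:ℝ)))..(1/2:ℝ), x^(α-2))/4) := by
  have hLpos : (0:ℝ) < L := by exact_mod_cast hL
  set c : ℝ := 1/(2*(L:ℝ)) with hc_def
  have hc : 0 < c := by positivity
  have hc2 : c ≤ 1/2 := by
    rw [hc_def]
    have hL1 : (1:ℝ) ≤ L := by exact_mod_cast hL
    rw [div_le_div_iff₀ (by positivity) (by norm_num)]
    linarith
  set φ : ℝ → ℝ := fun x => |x|^α * ‖Dker L x‖^2 with hφ_def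
  have contφ : Continuous φ := by
    apply Continuous.mul
    · exact Continuous.rpow_const continuous_abs (fun x => Or.inr h0)
    · exact ((cont_Dker L).norm).pow 2
  have intφ : ∀ a b : ℝ, IntervalIntegrable φ volume a b :=
    fun a b => contφ.intervalIntegrable a b
  have hφneg : ∀ x, φ (-x) = φ x := by
    intro x
    simp only [hφ_def, abs_neg, Dker_neg, RCLike.norm_conj]
  have hneg : (∫ x in (-(1/2):ℝ)..(0:ℝ), φ x) = ∫ x in (0:ℝ)..(1/2:ℝ), φ x := by
    have h := intervalIntegral.integral_comp_neg (a := (0:ℝ)) (b := (1/2:ℝ)) φ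
    simp only [hφneg, neg_zero] at h
    rw [← h]
  have hsplit : (∫ x in (-(1/2):ℝ)..(1/2:ℝ), φ x)
      = (∫ x in (-(1/2):ℝ)..(0:ℝ), φ x) + ∫ x in (0:ℝ)..(1/2:ℝ), φ x :=
    (intervalIntegral.integral_add_adjacent_intervals (intφ _ _) (intφ _ _)).symm
  have hsplit2 : (∫ x in (0:ℝ)..(1/2:ℝ), φ x)
      = (∫ x in (0:ℝ)..c, φ x) + ∫ x in c..(1/2:ℝ), φ x :=
    (intervalIntegral.integral_add_adjacent_intervals (intφ _ _) (intφ _ _)).symm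
  -- bound on [0,c]
  have int_rpow1 : IntervalIntegrable (fun x : ℝ => (L:ℝ)^2 * x^α) volume 0 c :=
    (intervalIntegral.intervalIntegrable_rpow (Or.inl h0)).const_mul _
  have bound1 : (∫ x in (0:ℝ)..c, φ x) ≤ ∫ x in (0:ℝ)..c, (L:ℝ)^2 * x^α := by
    apply intervalIntegral.integral_mono_on hc.le (intφ _ _) int_rpow1
    intro x hx
    rw [hφ_def]
    simp only
    rw [abs_of_nonneg hx.1]
    have hD2 : ‖Dker L x‖^2 ≤ (L:ℝ)^2 := by
      apply pow_le_pow_left₀ (norm_nonneg _) (Dker_norm_le L x)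
    calc x^α * ‖Dker L x‖^2 ≤ x^α * (L:ℝ)^2 :=
          mul_le_mul_of_nonneg_left hD2 (Real.rpow_nonneg hx.1 α)
      _ = (L:ℝ)^2 * x^α := by ring
  have eval1 : (∫ x in (0:ℝ)..c, (L:ℝ)^2 * x^α) = (L:ℝ)^2 * c^(α+1)/(α+1) := by
    rw [intervalIntegral.integral_const_mul, integral_rpow (Or.inl (by linarith : (-1:ℝ) < α))]
    rw [Real.zero_rpow (by linarith : α + 1 ≠ 0)]
    ring
  -- bound on [c, 1/2]
  have int_rpow2 : IntervalIntegrable (fun x : ℝ => x^(α-2)/4) volume c (1/2) := by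
    apply IntervalIntegrable.div_const
    apply intervalIntegral.intervalIntegrable_rpow
    right
    rw [Set.uIcc_of_le hc2]
    intro h
    rw [Set.mem_Icc] at h
    linarith [h.1]
  have bound2 : (∫ x in c..(1/2:ℝ), φ x) ≤ ∫ x in c..(1/2:ℝ), x^(α-2)/4 := by
    apply intervalIntegral.integral_mono_on hc2 (intφ _ _) int_rpow2
    intro x hx
    have hxpos : 0 < x := lt_of_lt_of_le hc hx.1
    rw [hφ_def]
    simp only
    rw [abs_of_nonneg hxpos.le]
    have hD : ‖Dker L x‖ ≤ 1/(2*x) := by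
      have := Dker_norm_le_inv L x (by rw [abs_of_nonneg hxpos.le]; exact hxpos)
        (by rw [abs_of_nonneg hxpos.le]; exact hx.2)
      rwa [abs_of_nonneg hxpos.le] at this
    have hD2 : ‖Dker L x‖^2 ≤ (1/(2*x))^2 :=
      pow_le_pow_left₀ (norm_nonneg _) hD 2
    calc x^α * ‖Dker L x‖^2 ≤ x^α * (1/(2*x))^2 :=
          mul_le_mul_of_nonneg_left hD2 (Real.rpow_nonneg hxpos.le α)
      _ = x^(α-2)/4 := by
          rw [Real.rpow_sub hxpos,
            show x^(2:ℝ) = x^(2:ℕ) by rw [← Real.rpow_natCast x 2]; norm_num]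
          have hx0 : x ≠ 0 := hxpos.ne'
          field_simp
          ring
  have eval2 : (∫ x in c..(1/2:ℝ), x^(α-2)/4) = (∫ x in c..(1/2:ℝ), x^(α-2))/4 := by
    rw [intervalIntegral.integral_div]
  calc (∫ x in (-(1/2):ℝ)..(1/2:ℝ), φ x)
      = (∫ x in (0:ℝ)..(1/2:ℝ), φ x) + ∫ x in (0:ℝ)..(1/2:ℝ), φ x := by
        rw [hsplit, hneg]
    _ = 2 * ((∫ x in (0:ℝ)..c, φ x) + ∫ x in c..(1/2:ℝ), φ x) := by rw [← hsplit2]; ring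
    _ ≤ 2*((L:ℝ)^2 * c^(α+1)/(α+1) + (∫ x in c..(1/2:ℝ), x^(α-2))/4) := by
        rw [← eval1, ← eval2]
        linarith [bound1, bound2]


lemma log_five_gt_one : (1:ℝ) < Real.log 5 := by
  rw [Real.lt_log_iff_exp_lt (by norm_num : (0:ℝ) < 5)]
  calc Real.exp 1 < 2.7182818286 := Real.exp_one_lt_d9
    _ < 5 := by norm_num

lemma five_rpow_bound (t : ℝ) (ht : 0 < t) (ht1 : t ≤ 1) :
    (5:ℝ)^(-t) < 1 - t/4 := by
  have hlog := log_five_gt_one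
  have h5t : (5:ℝ)^t = Real.exp (Real.log 5 * t) := Real.rpow_def_of_pos (by norm_num) t
  have hexp : Real.log 5 * t + 1 ≤ (5:ℝ)^t := by
    rw [h5t]; exact Real.add_one_le_exp _
  have h5tpos : (0:ℝ) < (5:ℝ)^t := Real.rpow_pos_of_pos (by norm_num) t
  have hneg : (5:ℝ)^(-t) = ((5:ℝ)^t)⁻¹ := Real.rpow_neg (by norm_num) t
  rw [hneg]
  rw [inv_lt_iff_one_lt_mul₀ h5tpos]
  have h14 : (0:ℝ) < 1 - t/4 := by linarith
  have key : 1 < (1 - t/4) * (Real.log 5 * t + 1) := by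
    nlinarith [mul_pos ht (sub_pos.mpr hlog),
      mul_nonneg (sub_nonneg.mpr ht1) (mul_nonneg (le_of_lt (lt_trans zero_lt_one hlog)) ht.le)]
  calc (1:ℝ) < (1 - t/4) * (Real.log 5 * t + 1) := key
    _ ≤ (1 - t/4) * (5:ℝ)^t := mul_le_mul_of_nonneg_left hexp h14.le

lemma q_le_half (α : ℝ) (h1 : α ≤ 1) : (π:ℝ)^(α-1) * (2:ℝ)^(-α) ≤ 1/2 := by
  have hπ2 : (1:ℝ) ≤ π/2 := by nlinarith [Real.pi_gt_three]
  have hsplit : (π:ℝ)^(α-1) = (π/2)^(α-1) * (2:ℝ)^(α-1) := by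
    rw [← Real.mul_rpow (by positivity) (by norm_num)]
    norm_num
  have h22 : (2:ℝ)^(α-1) * (2:ℝ)^(-α) = 1/2 := by
    rw [← Real.rpow_add (by norm_num : (0:ℝ) < 2),
      show (α-1) + -α = (-1:ℝ) by ring, Real.rpow_neg_one]
    norm_num
  have hle1 : (π/2:ℝ)^(α-1) ≤ 1 :=
    Real.rpow_le_one_of_one_le_of_nonpos hπ2 (by linarith)
  calc (π:ℝ)^(α-1) * (2:ℝ)^(-α) = (π/2)^(α-1) * ((2:ℝ)^(α-1) * (2:ℝ)^(-α)) := by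
        rw [hsplit]; ring
    _ = (π/2)^(α-1) * (1/2) := by rw [h22]
    _ ≤ 1 * (1/2) := by
        apply mul_le_mul_of_nonneg_right hle1 (by norm_num)
    _ = 1/2 := by norm_num

-- the core inequality for α < 1
lemma core_lt (α u q f5 : ℝ) (h0 : 0 ≤ α) (h1 : α < 1) (hu : 1 ≤ u)
    (hq0 : 0 < q) (hq : q ≤ 1/2) (hf5 : f5 < 1 - (1-α)/4) (hf5' : 0 < f5) :
    q * (2*u - (1+α)) < 2*(u - f5) := by
  have h2u : 0 ≤ 2*u - (1+α) := by linarith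
  calc q * (2*u - (1+α)) ≤ (1/2) * (2*u - (1+α)) :=
        mul_le_mul_of_nonneg_right hq h2u
    _ = u - (1+α)/2 := by ring
    _ < 2*(u - f5) := by nlinarith

lemma final_bound_lt (L : ℕ) (hL : 1 ≤ L) (α : ℝ) (h0 : 0 ≤ α) (h1 : α < 1) :
    (π^(α-1) * (1-α^2) * (L:ℝ) / ((L:ℝ)^(1-α) - (1/5:ℝ)^(1-α)))
      * (2*((L:ℝ)^2 * (1/(2*(L:ℝ)))^(α+1)/(α+1)
          + (∫ x in (1/(2*(L:ℝ)))..(1/2:ℝ), x^(α-2))/4)) < 2*(L:ℝ) := by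
  have hLr : (1:ℝ) ≤ (L:ℝ) := by exact_mod_cast hL
  have hLpos : (0:ℝ) < (L:ℝ) := by linarith
  have hc2 : (1/(2*(L:ℝ))) ≤ 1/2 := by
    rw [div_le_div_iff₀ (by positivity) (by norm_num)]; linarith
  have hcpos : (0:ℝ) < 1/(2*(L:ℝ)) := by positivity
  set u : ℝ := (L:ℝ)^(1-α) with hu_def
  have hu : 1 ≤ u := by
    calc (1:ℝ) = (L:ℝ)^(0:ℝ) := (Real.rpow_zero _).symm
      _ ≤ (L:ℝ)^(1-α) := Real.rpow_le_rpow_of_exponent_le hLr (by linarith)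
  set f5 : ℝ := (1/5:ℝ)^(1-α) with hf5_def
  have hf5_eq : f5 = (5:ℝ)^(-(1-α)) := by
    rw [hf5_def, show (1/5:ℝ) = (5:ℝ)⁻¹ by norm_num,
      Real.inv_rpow (by norm_num), ← Real.rpow_neg (by norm_num)]
  have hf5 : f5 < 1 - (1-α)/4 := by
    rw [hf5_eq]; exact five_rpow_bound (1-α) (by linarith) (by linarith)
  have hf5pos : 0 < f5 := by rw [hf5_def]; positivity
  have hden : 0 < u - f5 := by nlinarith
  -- evaluate the integral
  have hR : (∫ x in (1/(2*(L:ℝ)))..(1/2:ℝ), x^(α-2))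
      = ((1/2:ℝ)^(α-1) - (1/(2*(L:ℝ)))^(α-1))/(α-1) := by
    rw [integral_rpow]
    · rw [show α-2+1 = α-1 by ring]
    · right
      constructor
      · intro h; rw [sub_eq_iff_eq_add] at h; norm_num at h; linarith
      · rw [Set.uIcc_of_le hc2]
        intro h
        rw [Set.mem_Icc] at h
        linarith [h.1]
  set w : ℝ := (2:ℝ)^(-α) with hw_def
  have hwpos : 0 < w := by rw [hw_def]; positivity
  have h2a : (1/2:ℝ)^(α-1) = 2*w := by
    rw [show (1/2:ℝ) = (2:ℝ)⁻¹ by norm_num, Real.inv_rpow (by norm_num),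
      ← Real.rpow_neg (by norm_num), hw_def,
      show -(α-1) = 1 + -α by ring, Real.rpow_add (by norm_num : (0:ℝ)<2),
      Real.rpow_one]
  have hca : (1/(2*(L:ℝ)))^(α-1) = 2*w*u := by
    rw [show (1/(2*(L:ℝ))) = (2*(L:ℝ))⁻¹ by norm_num,
      Real.inv_rpow (by positivity), ← Real.rpow_neg (by positivity),
      show -(α-1) = 1-α by ring, Real.mul_rpow (by norm_num) hLpos.le,
      ← hu_def, show (2:ℝ)^(1-α) = 2*w by
        rw [hw_def, show (1-α) = 1 + -α by ring,
          Real.rpow_add (by norm_num : (0:ℝ)<2), Real.rpow_one]]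
  have hcb : (L:ℝ)^2 * (1/(2*(L:ℝ)))^(α+1) = w/2 * u := by
    rw [show (1/(2*(L:ℝ))) = (2*(L:ℝ))⁻¹ by norm_num,
      Real.inv_rpow (by positivity), ← Real.rpow_neg (by positivity),
      Real.mul_rpow (by norm_num) hLpos.le]
    have hL2 : (L:ℝ)^(2:ℕ) * (L:ℝ)^(-(α+1)) = u := by
      rw [show ((L:ℝ))^(2:ℕ) = (L:ℝ)^((2:ℕ):ℝ) by rw [Real.rpow_natCast],
        ← Real.rpow_add hLpos, show ((2:ℕ):ℝ) + -(α+1) = 1-α by push_cast; ring]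
    rw [show (2:ℝ)^(-(α+1)) = w/2 by
      rw [hw_def, show -(α+1) = -α + -1 by ring,
        Real.rpow_add (by norm_num : (0:ℝ)<2), Real.rpow_neg_one]; ring]
    linear_combination (w/2) * hL2
  have hq : π^(α-1) * w ≤ 1/2 := by rw [hw_def]; exact q_le_half α h1.le
  have hqpos : 0 < π^(α-1) * w := by
    apply mul_pos _ hwpos
    exact Real.rpow_pos_of_pos Real.pi_pos _
  have key : (π^(α-1) * w) * (2*u - (1+α)) < 2*(u - f5) :=
    core_lt α u (π^(α-1) * w) f5 h0 h1 hu hqpos hq hf5 hf5pos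
  rw [hR, h2a, hca, hcb]
  have hα1 : α + 1 ≠ 0 := by linarith
  have hα1' : α - 1 ≠ 0 := by linarith
  have lhs_eq : (π^(α-1) * (1-α^2) * (L:ℝ) / (u - f5))
      * (2*((w/2*u)/(α+1) + ((2*w - 2*w*u)/(α-1))/4))
      = (L:ℝ) * ((π^(α-1) * w) * (2*u - (1+α))) / (u - f5) := by
    field_simp
    ring
  rw [lhs_eq, div_lt_iff₀ hden]
  calc (L:ℝ) * ((π^(α-1) * w) * (2*u - (1+α)))
      < (L:ℝ) * (2*(u - f5)) := by
        apply mul_lt_mul_of_pos_left key hLpos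
    _ = 2*(L:ℝ)*(u - f5) := by ring

lemma final_bound_eq (L : ℕ) (hL : 1 ≤ L) :
    (2*(L:ℝ)/Real.log (5*(L:ℝ)))
      * (2*((L:ℝ)^2 * (1/(2*(L:ℝ)))^((1:ℝ)+1)/((1:ℝ)+1)
          + (∫ x in (1/(2*(L:ℝ)))..(1/2:ℝ), x^((1:ℝ)-2))/4)) < 2*(L:ℝ) := by
  have hLr : (1:ℝ) ≤ (L:ℝ) := by exact_mod_cast hL
  have hLpos : (0:ℝ) < (L:ℝ) := by linarith
  have hcpos : (0:ℝ) < 1/(2*(L:ℝ)) := by positivity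
  have hR : (∫ x in (1/(2*(L:ℝ)))..(1/2:ℝ), x^((1:ℝ)-2)) = Real.log (L:ℝ) := by
    rw [show (1:ℝ)-2 = -1 by norm_num]
    rw [show (fun x : ℝ => x ^ (-1:ℝ)) = (fun x : ℝ => 1/x) by
      funext x; rw [Real.rpow_neg_one, one_div]]
    rw [integral_one_div_of_pos hcpos (by norm_num)]
    congr 1
    field_simp
  have hq : (L:ℝ)^2 * (1/(2*(L:ℝ)))^((1:ℝ)+1) = 1/4 := by
    rw [show (1:ℝ)+1 = ((2:ℕ):ℝ) by norm_num, Real.rpow_natCast]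
    field_simp
    ring
  rw [hR, hq]
  have hlog5 := log_five_gt_one
  have hlogL : 0 ≤ Real.log (L:ℝ) := Real.log_nonneg hLr
  have hlog5L : Real.log (5*(L:ℝ)) = Real.log 5 + Real.log (L:ℝ) :=
    Real.log_mul (by norm_num) (ne_of_gt hLpos)
  have hpos : 0 < Real.log (5*(L:ℝ)) := by rw [hlog5L]; linarith
  rw [div_mul_eq_mul_div, div_lt_iff₀ hpos]
  have hfac : 2*((1/4:ℝ)/((1:ℝ)+1) + Real.log (L:ℝ)/4) < (1/2) * Real.log (5*(L:ℝ)) := by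
    rw [hlog5L]; linarith
  calc 2*(L:ℝ) * (2*((1/4:ℝ)/((1:ℝ)+1) + Real.log (L:ℝ)/4))
      < 2*(L:ℝ) * ((1/2) * Real.log (5*(L:ℝ))) :=
        mul_lt_mul_of_pos_left hfac (by linarith : (0:ℝ) < 2*(L:ℝ))
    _ ≤ 2*(L:ℝ) * Real.log (5*(L:ℝ)) := by nlinarith

theorem gaps_imply_oscillation (N : ℕ) (hN : 3 ≤ N)
    (ν : Fin N → ℕ) (hν : StrictMono ν) (hνpos : ∀ i, 0 < ν i)
    (a : Fin N → ℂ) (ha : ∀ i, a i ≠ 0)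
    (n : Fin N) (hn1 : 0 < (n : ℕ)) (hn2 : (n : ℕ) < N - 1)
    (Λ : ℕ)
    (hΛ : Λ = sInf ((fun m => ((ν m : ℤ) - (ν n : ℤ)).natAbs) '' {m | m ≠ n}))
    (B : ℝ → ℝ)
    (hB : ∀ α : ℝ, B α = if α = 1 then 2 * Λ / Real.log (5 * Λ)
      else π ^ (α - 1) * (1 - α^2) * Λ / ((Λ : ℝ) ^ (1 - α) - (1/5 : ℝ) ^ (1 - α))) :
    ∀ α ∈ Set.Icc (0:ℝ) 1,
      0 < volume {x : ℝ | x ∈ Set.Icc (-(1/2) : ℝ) (1/2) ∧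
        (1/4) * B α * ‖a n‖ * |x| ^ α <
          ‖∑ k : Fin N, a k * (Real.sin (2 * π * (ν k) * x) : ℂ)‖} := by
  intro α hα
  obtain ⟨hα0, hα1⟩ := hα
  -- facts about Λ
  have hNn : (n:ℕ) + 1 < N := by omega
  have hm₀ne : (⟨(n:ℕ)+1, hNn⟩ : Fin N) ≠ n := by
    intro h
    have := congrArg Fin.val h
    simp at this
  have hNE : ((fun m => ((ν m : ℤ) - (ν n : ℤ)).natAbs) '' {m | m ≠ n}).Nonempty :=
    ⟨_, ⟨⟨(n:ℕ)+1, hNn⟩, hm₀ne, rfl⟩⟩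
  have hmem : Λ ∈ ((fun m => ((ν m : ℤ) - (ν n : ℤ)).natAbs) '' {m | m ≠ n}) := by
    rw [hΛ]; exact Nat.sInf_mem hNE
  obtain ⟨m₂, hm₂ne, hm₂⟩ := hmem
  have hm₂' : ((ν m₂ : ℤ) - (ν n : ℤ)).natAbs = Λ := hm₂
  have hΛ1 : 1 ≤ Λ := by
    rcases Nat.eq_zero_or_pos Λ with h0 | h
    · exfalso
      rw [h0] at hm₂'
      have hval : ν m₂ = ν n := by omega
      exact hm₂ne (hν.injective hval)
    · exact h
  have hΛle : ∀ m, m ≠ n → Λ ≤ ((ν m : ℤ) - (ν n : ℤ)).natAbs := by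
    intro m hm
    rw [hΛ]
    exact Nat.sInf_le ⟨m, hm, rfl⟩
  have hn1' : (n:ℕ) - 1 < N := by omega
  have hm₁lt : (⟨(n:ℕ)-1, hn1'⟩ : Fin N) < n := by
    rw [Fin.lt_def]; simp; omega
  have hνm₁ : ν ⟨(n:ℕ)-1, hn1'⟩ < ν n := hν hm₁lt
  have hνm₁pos : 1 ≤ ν ⟨(n:ℕ)-1, hn1'⟩ := hνpos _
  have hΛν : Λ + 1 ≤ ν n := by
    have := hΛle _ (ne_of_lt hm₁lt)
    omega
  have hsum : ∀ k : Fin N, (Λ:ℤ) ≤ (ν k : ℤ) + (ν n : ℤ) := by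
    intro k
    have := hνpos k
    omega
  have hdiff : ∀ k : Fin N, k ≠ n → (Λ:ℤ) ≤ |(ν k : ℤ) - (ν n : ℤ)| := by
    intro k hk
    have := hΛle k hk
    rw [Int.abs_eq_natAbs]
    omega
  have hΛr1 : (1:ℝ) ≤ (Λ:ℝ) := by exact_mod_cast hΛ1
  -- nonnegativity of B
  have hBnn : 0 ≤ B α := by
    rw [hB]
    split_ifs with h
    · apply div_nonneg (by positivity)
      apply Real.log_nonneg
      linarith
    · apply div_nonneg
      · have h2 : 0 ≤ 1 - α^2 := by nlinarith
        have h3 : 0 < π^(α-1) := Real.rpow_pos_of_pos Real.pi_pos _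
        have h4 : (0:ℝ) ≤ Λ := by linarith
        positivity
      · have h5 : (1/5:ℝ)^(1-α) ≤ 1 :=
          Real.rpow_le_one (by norm_num) (by norm_num) (by linarith)
        have h6 : (1:ℝ) ≤ (Λ:ℝ)^(1-α) := by
          calc (1:ℝ) = (Λ:ℝ)^(0:ℝ) := (Real.rpow_zero _).symm
            _ ≤ (Λ:ℝ)^(1-α) := Real.rpow_le_rpow_of_exponent_le hΛr1 (by linarith)
        linarith
  have hcB : 0 ≤ 1/4 * B α * ‖a n‖ := by positivity
  -- contradiction setup
  by_contra hcon
  have hvol : volume {x : ℝ | x ∈ Set.Icc (-(1/2) : ℝ) (1/2) ∧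
      (1/4) * B α * ‖a n‖ * |x| ^ α <
        ‖∑ k : Fin N, a k * (Real.sin (2 * π * (ν k) * x) : ℂ)‖} = 0 := by
    exact le_antisymm (not_lt.mp hcon) zero_le
  have hae : ∀ᵐ x : ℝ, ¬(x ∈ Set.Icc (-(1/2) : ℝ) (1/2) ∧
      (1/4) * B α * ‖a n‖ * |x| ^ α <
        ‖∑ k : Fin N, a k * (Real.sin (2 * π * (ν k) * x) : ℂ)‖) := by
    rw [ae_iff]
    simp only [not_not]
    exact hvol
  -- the integral chain
  have contf : Continuous (fun x : ℝ => ∑ k : Fin N, a k * (Real.sin (2 * π * (ν k) * x) : ℂ)) := by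
    apply continuous_finset_sum
    intro k _
    fun_prop
  have contK : Continuous (fun x : ℝ =>
      (Real.sin (2*π*(ν n)*x) : ℂ) * (Dker Λ x * (starRingEnd ℂ) (Dker Λ x))) := by
    apply Continuous.mul
    · fun_prop
    · exact (cont_Dker Λ).mul ((Complex.continuous_conj).comp (cont_Dker Λ))
  have contg : Continuous (fun x : ℝ => 1/4 * B α * ‖a n‖ * (|x|^α * ‖Dker Λ x‖^2)) := by
    apply Continuous.mul continuous_const
    apply Continuous.mul
    · exact Continuous.rpow_const continuous_abs (fun x => Or.inr hα0)
    · exact ((cont_Dker Λ).norm).pow 2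
  have hae2 : ∀ᵐ x ∂(volume.restrict (Set.Icc (-(1/2):ℝ) (1/2))),
      ‖(∑ k : Fin N, a k * (Real.sin (2 * π * (ν k) * x) : ℂ))
          * ((Real.sin (2*π*(ν n)*x) : ℂ) * (Dker Λ x * (starRingEnd ℂ) (Dker Λ x)))‖
        ≤ 1/4 * B α * ‖a n‖ * (|x|^α * ‖Dker Λ x‖^2) := by
    rw [ae_restrict_iff' measurableSet_Icc]
    filter_upwards [hae] with x hx hxI
    have hfx : ‖∑ k : Fin N, a k * (Real.sin (2 * π * (ν k) * x) : ℂ)‖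
        ≤ 1/4 * B α * ‖a n‖ * |x|^α := by
      by_contra hlt
      push_neg at hlt
      exact hx ⟨hxI, hlt⟩
    have hKnorm : ‖(Real.sin (2*π*(ν n)*x) : ℂ) * (Dker Λ x * (starRingEnd ℂ) (Dker Λ x))‖
        ≤ ‖Dker Λ x‖^2 := by
      rw [norm_mul, norm_mul, RCLike.norm_conj]
      have hs : ‖((Real.sin (2*π*(ν n)*x) : ℝ) : ℂ)‖ ≤ 1 := by
        rw [Complex.norm_real, Real.norm_eq_abs]
        exact Real.abs_sin_le_one _
      calc ‖((Real.sin (2*π*(ν n)*x) : ℝ) : ℂ)‖ * (‖Dker Λ x‖ * ‖Dker Λ x‖)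
          ≤ 1 * (‖Dker Λ x‖ * ‖Dker Λ x‖) :=
            mul_le_mul_of_nonneg_right hs (by positivity)
        _ = ‖Dker Λ x‖^2 := by ring
    rw [norm_mul]
    calc ‖∑ k : Fin N, a k * (Real.sin (2 * π * (ν k) * x) : ℂ)‖
          * ‖(Real.sin (2*π*(ν n)*x) : ℂ) * (Dker Λ x * (starRingEnd ℂ) (Dker Λ x))‖
        ≤ (1/4 * B α * ‖a n‖ * |x|^α) * ‖Dker Λ x‖^2 := by
          apply mul_le_mul hfx hKnorm (norm_nonneg _)
          positivity
      _ = 1/4 * B α * ‖a n‖ * (|x|^α * ‖Dker Λ x‖^2) := by ring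
  have hId := main_identity N ν a n Λ hsum hdiff
  have h1 : ‖a n‖ * ((Λ:ℝ)/2)
      ≤ ∫ x in (-(1/2):ℝ)..(1/2:ℝ),
          ‖(∑ k : Fin N, a k * (Real.sin (2 * π * (ν k) * x) : ℂ))
            * ((Real.sin (2*π*(ν n)*x) : ℂ) * (Dker Λ x * (starRingEnd ℂ) (Dker Λ x)))‖ := by
    calc ‖a n‖ * ((Λ:ℝ)/2) = ‖a n * ((Λ:ℂ)/2)‖ := by
          rw [norm_mul]
          congr 1
          rw [norm_div]
          simp
      _ = ‖∫ x in (-(1/2):ℝ)..(1/2:ℝ),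
            ((∑ k : Fin N, a k * (Real.sin (2*π*(ν k)*x) : ℂ))
              * ((Real.sin (2*π*(ν n)*x) : ℂ) * (Dker Λ x * (starRingEnd ℂ) (Dker Λ x))))‖ := by
          rw [hId]
      _ ≤ _ := intervalIntegral.norm_integral_le_integral_norm (by norm_num)
  have h3 : (∫ x in (-(1/2):ℝ)..(1/2:ℝ),
        ‖(∑ k : Fin N, a k * (Real.sin (2 * π * (ν k) * x) : ℂ))
          * ((Real.sin (2*π*(ν n)*x) : ℂ) * (Dker Λ x * (starRingEnd ℂ) (Dker Λ x)))‖)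
      ≤ ∫ x in (-(1/2):ℝ)..(1/2:ℝ), 1/4 * B α * ‖a n‖ * (|x|^α * ‖Dker Λ x‖^2) := by
    apply intervalIntegral.integral_mono_ae_restrict (by norm_num)
    · exact ((contf.mul contK).norm).intervalIntegrable _ _
    · exact contg.intervalIntegrable _ _
    · exact hae2
  have h4 : (∫ x in (-(1/2):ℝ)..(1/2:ℝ), 1/4 * B α * ‖a n‖ * (|x|^α * ‖Dker Λ x‖^2))
      = 1/4 * B α * ‖a n‖ * ∫ x in (-(1/2):ℝ)..(1/2:ℝ), |x|^α * ‖Dker Λ x‖^2 :=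
    intervalIntegral.integral_const_mul _ _
  have h5 := J_bound Λ hΛ1 α hα0 hα1
  have h6 : B α * (2*((Λ:ℝ)^2 * (1/(2*(Λ:ℝ)))^(α+1)/(α+1)
      + (∫ x in (1/(2*(Λ:ℝ)))..(1/2:ℝ), x^(α-2))/4)) < 2*(Λ:ℝ) := by
    rcases eq_or_ne α 1 with hae1 | hne1
    · subst hae1
      rw [hB, if_pos rfl]
      push_cast
      exact final_bound_eq Λ hΛ1
    · rw [hB, if_neg hne1]
      push_cast
      exact final_bound_lt Λ hΛ1 α hα0 (lt_of_le_of_ne hα1 hne1)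
  have hna : 0 < ‖a n‖ := norm_pos_iff.mpr (ha n)
  have hstep : 1/4 * B α * ‖a n‖ * (∫ x in (-(1/2):ℝ)..(1/2:ℝ), |x|^α * ‖Dker Λ x‖^2)
      ≤ 1/4 * B α * ‖a n‖ * (2*((Λ:ℝ)^2 * (1/(2*(Λ:ℝ)))^(α+1)/(α+1)
        + (∫ x in (1/(2*(Λ:ℝ)))..(1/2:ℝ), x^(α-2))/4)) :=
    mul_le_mul_of_nonneg_left h5 hcB
  have hstrict : 1/4 * B α * ‖a n‖ * (2*((Λ:ℝ)^2 * (1/(2*(Λ:ℝ)))^(α+1)/(α+1)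
      + (∫ x in (1/(2*(Λ:ℝ)))..(1/2:ℝ), x^(α-2))/4)) < ‖a n‖ * ((Λ:ℝ)/2) := by
    calc 1/4 * B α * ‖a n‖ * (2*((Λ:ℝ)^2 * (1/(2*(Λ:ℝ)))^(α+1)/(α+1)
          + (∫ x in (1/(2*(Λ:ℝ)))..(1/2:ℝ), x^(α-2))/4))
        = (‖a n‖/4) * (B α * (2*((Λ:ℝ)^2 * (1/(2*(Λ:ℝ)))^(α+1)/(α+1)
          + (∫ x in (1/(2*(Λ:ℝ)))..(1/2:ℝ), x^(α-2))/4))) := by ring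
      _ < (‖a n‖/4) * (2*(Λ:ℝ)) := by
          apply mul_lt_mul_of_pos_left h6 (by positivity)
      _ = ‖a n‖ * ((Λ:ℝ)/2) := by ring
  linarith [h1, h3, h4 ▸ h3]
end

section
/- For every odd squarefree positive integer d, v(d) = ∏_{p | d} p²(p² + p − 1) (product over the primes dividing d), and v(2d) = 8 v(d). -/
open Finset

section aux
variable {F : Type*} [Field F] [Fintype F] [DecidableEq F]

variable {F : Type*} [Field F] [Fintype F] [DecidableEq F]

theorem sqsum (hF : ringChar F ≠ 2) (f : F → ℤ) :
    ∑ y : F, f (y^2) = ∑ a : F, (quadraticChar F a + 1) * f a := by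
  rw [← Finset.sum_fiberwise univ (fun y : F => y^2) (fun y => f (y^2))]
  refine Finset.sum_congr rfl fun a _ => ?_
  rw [Finset.sum_congr rfl (fun y hy => by rw [(Finset.mem_filter.mp hy).2]),
    Finset.sum_const, nsmul_eq_mul]
  congr 1
  have := quadraticChar_card_sqrts hF a
  rw [← this]; norm_cast; rw [Set.toFinset_setOf]

theorem shiftsum (hF : ringChar F ≠ 2) (a : F) : ∑ b : F, quadraticChar F (a + b) = 0 := by
  have := Equiv.sum_comp (Equiv.addLeft a) (fun b => quadraticChar F b)
  simp only [Equiv.coe_addLeft] at this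
  rw [this]; exact quadraticChar_sum_zero hF

theorem cubesum (hF : ringChar F ≠ 2) :
    ∑ a : F, ∑ b : F, quadraticChar F a * quadraticChar F b * quadraticChar F (a + b) = 0 := by
  obtain ⟨c, hc⟩ := quadraticChar_exists_neg_one' (F := F) hF
  set χ := quadraticChar F with hχ
  rw [← Fintype.sum_prod_type']
  set S := ∑ p : F × F, χ p.1 * χ p.2 * χ (p.1 + p.2) with hS
  have h2 : S = -S := by
    nth_rewrite 1 [hS, ← Equiv.sum_comp (Equiv.prodCongr (Equiv.mulLeft₀ (c:F) c.ne_zero)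
      (Equiv.mulLeft₀ (c:F) c.ne_zero)) (fun p : F × F => χ p.1 * χ p.2 * χ (p.1 + p.2))]
    rw [← Finset.sum_neg_distrib]
    refine Finset.sum_congr rfl fun p _ => ?_
    simp only [Equiv.prodCongr_apply, Prod.map, Equiv.mulLeft₀_apply]
    rw [show (c:F) * p.1 + (c:F) * p.2 = (c:F) * (p.1 + p.2) by ring,
      map_mul, map_mul, map_mul, hc]
    ring
  omega

theorem Tsum (hF : ringChar F ≠ 2) :
    ∑ y : F, ∑ z : F, quadraticChar F (y^2 + z^2) = 0 := by
  set χ := quadraticChar F with hχ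
  have step1 : ∀ y : F, ∑ z : F, χ (y^2 + z^2) = ∑ b : F, (χ b + 1) * χ (y^2 + b) :=
    fun y => sqsum hF (fun b => χ (y^2 + b))
  rw [Finset.sum_congr rfl (fun y _ => step1 y), Finset.sum_comm]
  have step2 : ∀ b : F, ∑ y : F, (χ b + 1) * χ (y^2 + b)
      = (χ b + 1) * ∑ a : F, (χ a + 1) * χ (a + b) := by
    intro b
    rw [← Finset.mul_sum, sqsum hF (fun a => χ (a + b))]
  rw [Finset.sum_congr rfl (fun b _ => step2 b)]
  have expand : ∀ b : F, (χ b + 1) * ∑ a : F, (χ a + 1) * χ (a + b)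
      = (∑ a : F, χ a * χ b * χ (a + b)) + (∑ a : F, χ a * χ (a + b))
        + χ b * (∑ a : F, χ (a + b)) + (∑ a : F, χ (a + b)) := by
    intro b
    rw [Finset.mul_sum, Finset.mul_sum, ← Finset.sum_add_distrib, ← Finset.sum_add_distrib,
      ← Finset.sum_add_distrib]
    exact Finset.sum_congr rfl fun a _ => by ring
  rw [Finset.sum_congr rfl (fun b _ => expand b)]
  rw [Finset.sum_add_distrib, Finset.sum_add_distrib, Finset.sum_add_distrib]
  have h4 : ∑ b : F, ∑ a : F, χ (a + b) = 0 := by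
    refine Finset.sum_eq_zero fun b _ => ?_
    rw [Finset.sum_congr rfl (fun a _ => by rw [add_comm a b])]
    exact shiftsum hF b
  have h3 : ∑ b : F, χ b * (∑ a : F, χ (a + b)) = 0 := by
    refine Finset.sum_eq_zero fun b _ => ?_
    rw [Finset.sum_congr rfl (fun a _ => by rw [add_comm a b]), shiftsum hF b, mul_zero]
  have h2 : ∑ b : F, ∑ a : F, χ a * χ (a + b) = 0 := by
    rw [Finset.sum_comm]
    refine Finset.sum_eq_zero fun a _ => ?_
    rw [← Finset.mul_sum, shiftsum hF a, mul_zero]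
  have h1 : ∑ b : F, ∑ a : F, χ a * χ b * χ (a + b) = 0 := by
    rw [Finset.sum_comm]; exact cubesum hF
  rw [h1, h2, h3, h4]; ring

theorem card_sqrt (hF : ringChar F ≠ 2) (a : F) :
    (Nat.card {x : F // x^2 = a} : ℤ) = quadraticChar F a + 1 := by
  have h := quadraticChar_card_sqrts hF a
  rw [Set.toFinset_card] at h
  rw [Nat.card_eq_fintype_card]
  convert h using 2
  exact Fintype.card_congr (Equiv.refl _)

theorem fieldcount (hF : ringChar F ≠ 2) :
    Nat.card {t : F × F × F // t.1^2 + t.2.1^2 + t.2.2^2 = 0} = Fintype.card F ^ 2 := by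
  set χ := quadraticChar F with hχ
  have e : {t : F × F × F // t.1^2 + t.2.1^2 + t.2.2^2 = 0} ≃
      (yz : F × F) × {x : F // x^2 = -(yz.1^2 + yz.2^2)} :=
    { toFun := fun t => ⟨(t.1.2.1, t.1.2.2), ⟨t.1.1, by have := t.2; dsimp at this ⊢; linear_combination this⟩⟩
      invFun := fun s => ⟨(s.2.1, s.1.1, s.1.2), by have := s.2.2; dsimp at this ⊢; linear_combination this⟩
      left_inv := fun t => rfl
      right_inv := fun s => rfl }
  rw [Nat.card_congr e, Nat.card_eq_fintype_card, Fintype.card_sigma]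
  simp only [← Nat.card_eq_fintype_card]
  have key : (∑ yz : F × F, (Nat.card {x : F // x^2 = -(yz.1^2 + yz.2^2)} : ℤ))
      = (Nat.card F : ℤ) ^ 2 := by
    rw [Finset.sum_congr rfl (fun yz _ => card_sqrt hF (-(yz.1^2 + yz.2^2))),
      Finset.sum_add_distrib]
    have hz : ∑ yz : F × F, χ (-(yz.1^2 + yz.2^2)) = 0 := by
      rw [Fintype.sum_prod_type]
      have hm : ∀ y z : F, χ (-(y^2 + z^2)) = χ (-1) * χ (y^2 + z^2) := by
        intro y z
        rw [show -(y^2+z^2) = (-1 : F) * (y^2+z^2) by ring, map_mul]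
      simp_rw [hm, ← Finset.mul_sum]
      rw [Tsum hF, mul_zero]
    rw [hz, zero_add]
    simp [Nat.card_eq_fintype_card, Finset.card_univ, sq]
  exact_mod_cast key

end aux


section lift
variable {p : ℕ} [hp : Fact p.Prime]

local notation "π" => ZMod.castHom (dvd_pow_self p two_ne_zero) (ZMod p)

private def iota (a : ZMod p) : ZMod (p^2) := (a.val : ZMod (p^2))

private def delta (x : ZMod (p^2)) : ZMod p := ((x.val / p : ℕ) : ZMod p)

lemma pi_iota (a : ZMod p) : π (iota a) = a := by
  rw [iota, map_natCast, ZMod.natCast_rightInverse a]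

omit hp in
lemma psq_zero : ((p : ZMod (p^2)))^2 = 0 := by
  rw [← Nat.cast_pow, ZMod.natCast_self]

lemma pmul_eq_zero_iff (x : ZMod (p^2)) : (p : ZMod (p^2)) * x = 0 ↔ π x = 0 := by
  haveI : NeZero (p^2) := ⟨pow_ne_zero 2 hp.out.ne_zero⟩
  rw [← ZMod.natCast_rightInverse x, ← Nat.cast_mul, map_natCast,
    ZMod.natCast_eq_zero_iff, ZMod.natCast_eq_zero_iff]
  constructor
  · rintro ⟨c, hc⟩
    exact ⟨c, Nat.eq_of_mul_eq_mul_left hp.out.pos (by rw [hc]; ring)⟩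
  · rintro ⟨c, hc⟩
    exact ⟨c, by rw [hc]; ring⟩

lemma pi_zero_iff (x : ZMod (p^2)) : π x = 0 ↔ (p : ZMod (p^2)) * iota (delta x) = x := by
  haveI : NeZero (p^2) := ⟨pow_ne_zero 2 hp.out.ne_zero⟩
  constructor
  · intro h
    have hdvd : p ∣ x.val := by
      rw [← ZMod.natCast_eq_zero_iff]
      rw [← ZMod.natCast_rightInverse x, map_natCast] at h
      exact h
    obtain ⟨k, hk⟩ := hdvd
    have hklt : k < p := by
      have := x.val_lt
      rw [hk, pow_two] at this
      exact lt_of_mul_lt_mul_left this (Nat.zero_le p)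
    have : delta x = (k : ZMod p) := by rw [delta, hk, Nat.mul_div_cancel_left _ hp.out.pos]
    rw [this, iota, ZMod.val_cast_of_lt hklt, ← Nat.cast_mul, ← hk, ZMod.natCast_rightInverse x]
  · intro h
    rw [← h, map_mul, map_natCast, ZMod.natCast_self, zero_mul]

lemma delta_pmul (a : ZMod p) : delta ((p : ZMod (p^2)) * iota a) = a := by
  haveI : NeZero (p^2) := ⟨pow_ne_zero 2 hp.out.ne_zero⟩
  have hlt : p * a.val < p^2 := by
    rw [pow_two]
    exact mul_lt_mul_of_pos_left a.val_lt hp.out.pos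
  rw [delta, iota, show (p : ZMod (p^2)) * (a.val : ZMod (p^2)) = ((p * a.val : ℕ) : ZMod (p^2)) by push_cast; ring,
    ZMod.val_cast_of_lt hlt, Nat.mul_div_cancel_left _ hp.out.pos, ZMod.natCast_rightInverse a]

lemma card_ker : Nat.card {x : ZMod (p^2) // π x = 0} = p := by
  have e : ZMod p ≃ {x : ZMod (p^2) // π x = 0} :=
    { toFun := fun a => ⟨(p : ZMod (p^2)) * iota a, by
        rw [map_mul, map_natCast, ZMod.natCast_self, zero_mul]⟩
      invFun := fun x => delta x.1
      left_inv := fun a => delta_pmul a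
      right_inv := fun x => Subtype.ext ((pi_zero_iff x.1).mp x.2) }
  rw [← Nat.card_congr e, Nat.card_zmod]

lemma sq_zero_of_pi_zero {x : ZMod (p^2)} (hx : π x = 0) : x^2 = 0 := by
  rw [← (pi_zero_iff x).mp hx, mul_pow, psq_zero, zero_mul]

lemma card_fiber_zero :
    Nat.card {t : ZMod (p^2) × ZMod (p^2) × ZMod (p^2) //
      (t.1^2 + t.2.1^2 + t.2.2^2 = 0) ∧ π t.1 = 0 ∧ π t.2.1 = 0 ∧ π t.2.2 = 0} = p^3 := by
  have e : {t : ZMod (p^2) × ZMod (p^2) × ZMod (p^2) //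
      (t.1^2 + t.2.1^2 + t.2.2^2 = 0) ∧ π t.1 = 0 ∧ π t.2.1 = 0 ∧ π t.2.2 = 0} ≃
      {x : ZMod (p^2) // π x = 0} × {x : ZMod (p^2) // π x = 0} × {x : ZMod (p^2) // π x = 0} :=
    { toFun := fun t => (⟨t.1.1, t.2.2.1⟩, ⟨t.1.2.1, t.2.2.2.1⟩, ⟨t.1.2.2, t.2.2.2.2⟩)
      invFun := fun x => ⟨(x.1.1, x.2.1.1, x.2.2.1), by
        rw [sq_zero_of_pi_zero x.1.2, sq_zero_of_pi_zero x.2.1.2, sq_zero_of_pi_zero x.2.2.2,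
          add_zero, add_zero]
        exact ⟨rfl, x.1.2, x.2.1.2, x.2.2.2⟩⟩
      left_inv := fun t => rfl
      right_inv := fun x => rfl }
  rw [Nat.card_congr e, Nat.card_prod, Nat.card_prod, card_ker]
  ring

lemma lincount_aux (u1 u2 u3 e : ZMod p) (h : u1 ≠ 0) :
    Nat.card {v : ZMod p × ZMod p × ZMod p // u1 * v.1 + u2 * v.2.1 + u3 * v.2.2 = e}
      = p^2 := by
  have e1 : {v : ZMod p × ZMod p × ZMod p // u1 * v.1 + u2 * v.2.1 + u3 * v.2.2 = e}
      ≃ ZMod p × ZMod p :=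
    { toFun := fun v => (v.1.2.1, v.1.2.2)
      invFun := fun w => ⟨(u1⁻¹ * (e - u2 * w.1 - u3 * w.2), w.1, w.2), by
        dsimp only; field_simp; ring⟩
      left_inv := fun v => by
        apply Subtype.ext
        obtain ⟨⟨a, b, c⟩, hv⟩ := v
        dsimp only at hv ⊢
        have : a = u1⁻¹ * (e - u2 * b - u3 * c) := by
          field_simp
          linear_combination hv
        rw [← this]
      right_inv := fun w => rfl }
  rw [Nat.card_congr e1, Nat.card_prod, Nat.card_zmod]
  ring

lemma lincount (u1 u2 u3 e : ZMod p) (h : ¬(u1 = 0 ∧ u2 = 0 ∧ u3 = 0)) :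
    Nat.card {v : ZMod p × ZMod p × ZMod p // u1 * v.1 + u2 * v.2.1 + u3 * v.2.2 = e}
      = p^2 := by
  by_cases h1 : u1 = 0
  · by_cases h2 : u2 = 0
    · have h3 : u3 ≠ 0 := fun h3 => h ⟨h1, h2, h3⟩
      have e1 : {v : ZMod p × ZMod p × ZMod p // u1 * v.1 + u2 * v.2.1 + u3 * v.2.2 = e}
          ≃ {v : ZMod p × ZMod p × ZMod p // u3 * v.1 + u2 * v.2.1 + u1 * v.2.2 = e} :=
        { toFun := fun v => ⟨(v.1.2.2, v.1.2.1, v.1.1), by linear_combination v.2⟩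
          invFun := fun v => ⟨(v.1.2.2, v.1.2.1, v.1.1), by linear_combination v.2⟩
          left_inv := fun v => rfl
          right_inv := fun v => rfl }
      rw [Nat.card_congr e1, lincount_aux u3 u2 u1 e h3]
    · have e1 : {v : ZMod p × ZMod p × ZMod p // u1 * v.1 + u2 * v.2.1 + u3 * v.2.2 = e}
          ≃ {v : ZMod p × ZMod p × ZMod p // u2 * v.1 + u1 * v.2.1 + u3 * v.2.2 = e} :=
        { toFun := fun v => ⟨(v.1.2.1, v.1.1, v.1.2.2), by linear_combination v.2⟩
          invFun := fun v => ⟨(v.1.2.1, v.1.1, v.1.2.2), by linear_combination v.2⟩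
          left_inv := fun v => rfl
          right_inv := fun v => rfl }
      rw [Nat.card_congr e1, lincount_aux u2 u1 u3 e h2]
  · exact lincount_aux u1 u2 u3 e h1

lemma lift_coord {s : ZMod p} {x : ZMod (p^2)} (hx : π x = s) :
    iota s + (p : ZMod (p^2)) * iota (delta (x - iota s)) = x := by
  have h0 : π (x - iota s) = 0 := by rw [map_sub, hx, pi_iota, sub_self]
  have h' := (pi_zero_iff _).mp h0
  linear_combination h'

lemma card_fiber_nonzero (hp2 : p ≠ 2) (s1 s2 s3 : ZMod p)
    (hs0 : s1^2 + s2^2 + s3^2 = 0) (hs : ¬(s1 = 0 ∧ s2 = 0 ∧ s3 = 0)) :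
    Nat.card {t : ZMod (p^2) × ZMod (p^2) × ZMod (p^2) //
      (t.1^2 + t.2.1^2 + t.2.2^2 = 0) ∧ π t.1 = s1 ∧ π t.2.1 = s2 ∧ π t.2.2 = s3} = p^2 := by
  set L1 := iota s1 with hL1
  set L2 := iota s2 with hL2
  set L3 := iota s3 with hL3
  have hQL : π (L1^2 + L2^2 + L3^2) = 0 := by
    rw [map_add, map_add, map_pow, map_pow, map_pow, hL1, hL2, hL3,
      pi_iota, pi_iota, pi_iota, hs0]
  have hQLw := (pi_zero_iff _).mp hQL
  set w := delta (L1^2 + L2^2 + L3^2) with hw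
  have key : ∀ v1 v2 v3 : ZMod p,
      ((L1 + p * iota v1)^2 + (L2 + p * iota v2)^2 + (L3 + p * iota v3)^2 = 0)
      ↔ (2*s1) * v1 + (2*s2) * v2 + (2*s3) * v3 = -w := by
    intro v1 v2 v3
    have expand : (L1 + p * iota v1)^2 + (L2 + p * iota v2)^2 + (L3 + p * iota v3)^2
        = (p : ZMod (p^2)) * (iota w + 2*(L1 * iota v1 + L2 * iota v2 + L3 * iota v3)) := by
      linear_combination (-1 : ZMod (p^2)) * hQLw
        + ((iota v1)^2 + (iota v2)^2 + (iota v3)^2) * (psq_zero (p := p))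
    rw [expand, pmul_eq_zero_iff]
    simp only [hL1, hL2, hL3, map_add, map_mul, map_ofNat, pi_iota]
    constructor <;> intro h <;> linear_combination h
  have e : {t : ZMod (p^2) × ZMod (p^2) × ZMod (p^2) //
      (t.1^2 + t.2.1^2 + t.2.2^2 = 0) ∧ π t.1 = s1 ∧ π t.2.1 = s2 ∧ π t.2.2 = s3} ≃
      {v : ZMod p × ZMod p × ZMod p // (2*s1) * v.1 + (2*s2) * v.2.1 + (2*s3) * v.2.2 = -w} :=
    { toFun := fun t => ⟨(delta (t.1.1 - L1), delta (t.1.2.1 - L2), delta (t.1.2.2 - L3)), by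
        refine (key _ _ _).mp ?_
        rw [lift_coord t.2.2.1, lift_coord t.2.2.2.1, lift_coord t.2.2.2.2]
        exact t.2.1⟩
      invFun := fun v => ⟨(L1 + p * iota v.1.1, L2 + p * iota v.1.2.1, L3 + p * iota v.1.2.2), by
        refine ⟨(key _ _ _).mpr v.2, ?_, ?_, ?_⟩ <;>
        · rw [map_add, map_mul, map_natCast, ZMod.natCast_self, zero_mul, add_zero, pi_iota]⟩
      left_inv := fun t => by
        apply Subtype.ext
        exact Prod.ext (lift_coord t.2.2.1)
          (Prod.ext (lift_coord t.2.2.2.1) (lift_coord t.2.2.2.2))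
      right_inv := fun v => by
        apply Subtype.ext
        refine Prod.ext ?_ (Prod.ext ?_ ?_) <;>
        · dsimp only
          rw [add_sub_cancel_left, delta_pmul] }
  rw [Nat.card_congr e]
  have h2 : (2 : ZMod p) ≠ 0 := by
    have : ((2 : ℕ) : ZMod p) = 0 ↔ p ∣ 2 := ZMod.natCast_eq_zero_iff 2 p
    intro hc
    rw [show (2 : ZMod p) = ((2:ℕ) : ZMod p) by push_cast; ring] at hc
    exact hp2 ((Nat.prime_dvd_prime_iff_eq hp.out Nat.prime_two).mp (this.mp hc))
  refine lincount _ _ _ _ ?_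
  rintro ⟨h1', h2', h3'⟩
  exact hs ⟨by simpa [h2] using mul_eq_zero.mp h1',
    by simpa [h2] using mul_eq_zero.mp h2', by simpa [h2] using mul_eq_zero.mp h3'⟩

theorem primecount (hp2 : p ≠ 2) :
    Nat.card {t : ZMod (p^2) × ZMod (p^2) × ZMod (p^2) // t.1^2 + t.2.1^2 + t.2.2^2 = 0}
      = p^2 * (p^2 + p - 1) := by
  haveI : NeZero (p^2) := ⟨pow_ne_zero 2 hp.out.ne_zero⟩
  haveI : NeZero p := ⟨hp.out.ne_zero⟩
  have hchar : ringChar (ZMod p) ≠ 2 := by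
    rw [ZMod.ringChar_zmod_n]; exact hp2
  set T := {t : ZMod (p^2) × ZMod (p^2) × ZMod (p^2) // t.1^2 + t.2.1^2 + t.2.2^2 = 0} with hT
  set S := {s : ZMod p × ZMod p × ZMod p // s.1^2 + s.2.1^2 + s.2.2^2 = 0} with hSdef
  have hcardS : Fintype.card S = p^2 := by
    rw [← Nat.card_eq_fintype_card, hSdef, fieldcount hchar, ZMod.card]
  set R : T → S := fun t => ⟨(π t.1.1, π t.1.2.1, π t.1.2.2), by
    have := t.2
    dsimp only at this ⊢
    rw [← map_pow, ← map_pow, ← map_pow, ← map_add, ← map_add, this, map_zero]⟩ with hR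
  set z : S := ⟨(0, 0, 0), by norm_num⟩ with hz
  have hfib : ∀ s : S, Nat.card {t : T // R t = s} = if s = z then p^3 else p^2 := by
    intro s
    have e : {t : T // R t = s} ≃ {t : ZMod (p^2) × ZMod (p^2) × ZMod (p^2) //
        (t.1^2 + t.2.1^2 + t.2.2^2 = 0) ∧ π t.1 = s.1.1 ∧ π t.2.1 = s.1.2.1 ∧ π t.2.2 = s.1.2.2} :=
      { toFun := fun u => ⟨u.1.1, u.1.2, by
          have h := congrArg Subtype.val u.2
          exact ⟨congrArg Prod.fst h, congrArg (fun q => q.2.1) h, congrArg (fun q => q.2.2) h⟩⟩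
        invFun := fun v => ⟨⟨v.1, v.2.1⟩, Subtype.ext
          (Prod.ext v.2.2.1 (Prod.ext v.2.2.2.1 v.2.2.2.2))⟩
        left_inv := fun u => by
          apply Subtype.ext; apply Subtype.ext; rfl
        right_inv := fun v => rfl }
    rw [Nat.card_congr e]
    by_cases hsz : s = z
    · rw [if_pos hsz, hsz]
      exact card_fiber_zero
    · rw [if_neg hsz]
      refine card_fiber_nonzero hp2 _ _ _ s.2 ?_
      rintro ⟨h1, h2, h3⟩
      exact hsz (Subtype.ext (by rw [hz]; exact Prod.ext h1 (Prod.ext h2 h3)))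
  have hsig : Nat.card T = ∑ s : S, Nat.card {t : T // R t = s} := by
    rw [← Nat.card_congr (Equiv.sigmaFiberEquiv R), Nat.card_eq_fintype_card,
      Fintype.card_sigma]
    simp only [Nat.card_eq_fintype_card]
  rw [hsig, Finset.sum_congr rfl (fun s _ => hfib s),
    ← Finset.add_sum_erase Finset.univ _ (Finset.mem_univ z), if_pos rfl]
  rw [Finset.sum_congr rfl (fun s hs => if_neg (Finset.ne_of_mem_erase hs)),
    Finset.sum_const, Finset.card_erase_of_mem (Finset.mem_univ z), Finset.card_univ, hcardS,
    smul_eq_mul]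
  have h1 : 1 ≤ p^2 := Nat.one_le_pow _ _ hp.out.pos
  have h2' : 1 ≤ p^2 + p := by omega
  zify [h1, h2']
  ring

end lift

/-- `v(d)`: number of solutions of `x² + y² + z² ≡ 0 (mod d²)`. -/
noncomputable def vcount (d : ℕ) : ℕ :=
  Nat.card {t : ZMod (d^2) × ZMod (d^2) × ZMod (d^2) // t.1^2 + t.2.1^2 + t.2.2^2 = 0}



theorem solcount_mul {A B C : Type*} [CommRing A] [CommRing B] [CommRing C] (E : A ≃+* B × C) :
    Nat.card {t : A × A × A // t.1^2 + t.2.1^2 + t.2.2^2 = 0}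
      = Nat.card {t : B × B × B // t.1^2 + t.2.1^2 + t.2.2^2 = 0}
        * Nat.card {t : C × C × C // t.1^2 + t.2.1^2 + t.2.2^2 = 0} := by
  rw [← Nat.card_prod]
  refine Nat.card_congr ?_
  refine { toFun := fun t => (⟨((E t.1.1).1, (E t.1.2.1).1, (E t.1.2.2).1), ?_⟩,
             ⟨((E t.1.1).2, (E t.1.2.1).2, (E t.1.2.2).2), ?_⟩)
           invFun := fun u => ⟨(E.symm (u.1.1.1, u.2.1.1), E.symm (u.1.1.2.1, u.2.1.2.1),
             E.symm (u.1.1.2.2, u.2.1.2.2)), ?_⟩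
           left_inv := ?_
           right_inv := ?_ }
  · have h : E (t.1.1^2 + t.1.2.1^2 + t.1.2.2^2) = 0 := by rw [t.2, map_zero]
    have := congrArg Prod.fst h
    simpa using this
  · have h : E (t.1.1^2 + t.1.2.1^2 + t.1.2.2^2) = 0 := by rw [t.2, map_zero]
    have := congrArg Prod.snd h
    simpa using this
  · show E.symm _ ^ 2 + E.symm _ ^ 2 + E.symm _ ^ 2 = 0
    rw [← map_pow, ← map_pow, ← map_pow, ← map_add, ← map_add]
    have h1 := u.1.2
    have h2 := u.2.2
    rw [show ((u.1.1.1, u.2.1.1) : B × C)^2 + ((u.1.1.2.1, u.2.1.2.1) : B × C)^2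
        + ((u.1.1.2.2, u.2.1.2.2) : B × C)^2 = ((0 : B), (0 : C)) from ?_]
    · rw [show ((0 : B), (0 : C)) = ((0 : B × C)) from rfl, map_zero]
    · rw [Prod.ext_iff]
      constructor
      · simpa using h1
      · simpa using h2
  · intro t
    apply Subtype.ext
    refine Prod.ext ?_ (Prod.ext ?_ ?_) <;> simp
  · intro u
    refine Prod.ext (Subtype.ext ?_) (Subtype.ext ?_) <;>
      refine Prod.ext ?_ (Prod.ext ?_ ?_) <;> simp

theorem vcount_mul {m n : ℕ} (h : Nat.Coprime m n) :
    vcount (m * n) = vcount m * vcount n := by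
  rw [vcount, vcount, vcount]
  rw [show (m*n)^2 = m^2 * n^2 from mul_pow m n 2]
  exact solcount_mul (ZMod.chineseRemainder (Nat.Coprime.pow 2 2 h))

theorem vcount_one : vcount 1 = 1 := by
  rw [vcount]
  have h1 : (1:ℕ)^2 = 1 := one_pow 2
  rw [h1]
  exact Nat.card_eq_one_iff_unique.mpr
    ⟨⟨fun a b => Subtype.ext (Subsingleton.elim _ _)⟩, ⟨⟨(0,0,0), by simp⟩⟩⟩

theorem vcount_two : vcount 2 = 8 := by
  rw [vcount, Nat.card_eq_fintype_card]
  decide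

theorem vcount_sf {d : ℕ} (hodd : Odd d) (hsf : Squarefree d) :
    vcount d = ∏ p ∈ d.primeFactors, p^2 * (p^2 + p - 1) := by
  induction d using Nat.strong_induction_on with
  | _ d ih =>
    rcases eq_or_ne d 1 with rfl | hd1
    · simp [vcount_one]
    have hd0 : d ≠ 0 := hsf.ne_zero
    set p := d.minFac with hpdef
    have hp : p.Prime := Nat.minFac_prime hd1
    haveI : Fact p.Prime := ⟨hp⟩
    obtain ⟨m, hm⟩ : p ∣ d := Nat.minFac_dvd d
    have hm0 : m ≠ 0 := by rintro rfl; simp [hm] at hd0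
    have hpm : ¬ p ∣ m := by
      intro hdvd
      have : p * p ∣ d := by
        obtain ⟨k, hk⟩ := hdvd
        exact ⟨k, by rw [hm, hk]; ring⟩
      exact hp.not_isUnit (hsf p this)
    have hcop : Nat.Coprime p m := (Nat.Prime.coprime_iff_not_dvd hp).mpr hpm
    have hmd : m ∣ d := ⟨p, by rw [hm]; ring⟩
    have hmodd : Odd m := by
      rcases Nat.even_or_odd m with he | ho
      · exfalso
        have : Even d := hm ▸ he.mul_left p
        exact (Nat.not_odd_iff_even.mpr this) hodd
      · exact ho
    have hmsf : Squarefree m := hsf.squarefree_of_dvd hmd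
    have hmlt : m < d := by
      have hp1 : 1 < p := hp.one_lt
      calc m = 1 * m := (one_mul m).symm
      _ < p * m := by
          apply Nat.mul_lt_mul_of_lt_of_le hp1 (le_refl m)
          omega
      _ = d := hm.symm
    have hpodd : p ≠ 2 := by
      intro h2
      rw [Nat.odd_iff] at hodd
      have : (2 : ℕ) ∣ d := h2 ▸ Nat.minFac_dvd d
      omega
    rw [hm, vcount_mul hcop, ih m hmlt hmodd hmsf]
    have hvp : vcount p = p^2 * (p^2 + p - 1) := primecount hpodd
    have hpf : (p * m).primeFactors = insert p m.primeFactors := by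
      rw [Nat.primeFactors_mul hp.ne_zero hm0, Nat.Prime.primeFactors hp]
      rfl
    rw [hpf, Finset.prod_insert (fun hmem => hpm (Nat.dvd_of_mem_primeFactors hmem)), hvp]

theorem vcount_eval (d : ℕ) (hodd : Odd d) (hsf : Squarefree d) :
    vcount d = ∏ p ∈ d.primeFactors, p^2 * (p^2 + p - 1) ∧
    vcount (2 * d) = 8 * vcount d := by
  refine ⟨vcount_sf hodd hsf, ?_⟩
  have hcop : Nat.Coprime 2 d := by
    exact Nat.coprime_two_left.mpr hodd
  rw [vcount_mul hcop, vcount_two]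
end

section
/- Let k be a positive integer, 1 ≤ ℓ ≤ k, let A₁, …, A_ℓ be a partition of {1, …, k} into nonempty sets and B₁, …, B_ℓ a partition of {k+1, …, 2k} into nonempty sets. Then the sum of 1/(s₁ s₂ ⋯ s_{2k}) over all tuples (s₁, …, s_{2k}) of positive integers satisfying ∑_{j ∈ A_i} s_j = ∑_{j ∈ B_i} s_j for every 1 ≤ i ≤ ℓ is finite, and is bounded above by a constant depending only on k. -/
open Real Finset

open scoped ENNReal

lemma tsum_pi_prod (g : ℕ+ → ℝ≥0∞) (n : ℕ) :
    ∑' t : Fin n → ℕ+, ∏ j, g (t j) = (∑' m : ℕ+, g m) ^ n := by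
  induction n with
  | zero =>
    rw [pow_zero, tsum_eq_single (fun i => i.elim0)]
    · simp
    · intro b hb; exact absurd (funext fun i => i.elim0) hb
  | succ n ih =>
    calc ∑' t : Fin (n+1) → ℕ+, ∏ j, g (t j)
        = ∑' p : ℕ+ × (Fin n → ℕ+), ∏ j, g ((Fin.consEquiv (fun _ => ℕ+)) p j) :=
          ((Fin.consEquiv (fun _ => ℕ+)).tsum_eq (fun t => ∏ j, g (t j))).symm
      _ = ∑' p : ℕ+ × (Fin n → ℕ+), g p.1 * ∏ j, g (p.2 j) := by
          apply tsum_congr; intro p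
          rw [Fin.prod_univ_succ]
          simp [Fin.consEquiv]
      _ = ∑' a : ℕ+, ∑' b : Fin n → ℕ+, g a * ∏ j, g (b j) :=
          ENNReal.tsum_prod (f := fun (a : ℕ+) (b : Fin n → ℕ+) => g a * ∏ j, g (b j))
      _ = (∑' m : ℕ+, g m) * ∑' t : Fin n → ℕ+, ∏ j, g (t j) := by
          simp_rw [ENNReal.tsum_mul_left]
          rw [ENNReal.tsum_mul_right]
      _ = (∑' m : ℕ+, g m) ^ (n+1) := by rw [ih, pow_succ]; ring

lemma pnat_rpow_tsum_ne_top {p : ℝ} (hp : p < -1) :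
    ∑' m : ℕ+, (m : ℝ≥0∞) ^ p ≠ ⊤ := by
  have he : ∑' m : ℕ+, ((m : ℕ) : ℝ≥0∞) ^ p
      = ∑' n : ℕ, ((n.succPNat : ℕ) : ℝ≥0∞) ^ p := by
    exact (Equiv.pnatEquivNat.symm.tsum_eq (fun m : ℕ+ => ((m : ℕ) : ℝ≥0∞) ^ p)).symm
  have hsum : Summable (fun n : ℕ => ((n.succPNat : ℕ) : ℝ) ^ p) := by
    have h2 := (Real.summable_nat_rpow.mpr hp).comp_injective Nat.succ_injective
    apply h2.congr
    intro n
    simp [Function.comp, Nat.succPNat]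
  rw [he]
  have hof : ∀ n : ℕ, ((n.succPNat : ℕ) : ℝ≥0∞) ^ p
      = ENNReal.ofReal (((n.succPNat : ℕ) : ℝ) ^ p) := by
    intro n
    have hpos : (0:ℝ) < ((n.succPNat : ℕ) : ℝ) := by exact_mod_cast n.succPNat.pos
    rw [← ENNReal.ofReal_rpow_of_pos hpos, ENNReal.ofReal_natCast]
  simp_rw [hof]
  rw [← ENNReal.ofReal_tsum_of_nonneg (fun n => by positivity) hsum]
  exact ENNReal.ofReal_ne_top

theorem key_bound (k : ℕ) (hk : 0 < k) (ℓ : ℕ) (hlk : ℓ ≤ k)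
    (A B : Fin ℓ → Finset (Fin k))
    (hAu : ∀ x : Fin k, ∃! i, x ∈ A i)
    (hB : ∀ i, (B i).Nonempty) (hBu : ∀ x : Fin k, ∃! i, x ∈ B i) :
    ∑' s : {s : Fin (k + k) → ℕ+ //
        ∀ i, ∑ j ∈ A i, (s (Fin.castAdd k j) : ℕ) =
          ∑ j ∈ B i, (s (Fin.natAdd k j) : ℕ)},
      ∏ t : Fin (k+k), (((s : Fin (k+k) → ℕ+) t : ℕ) : ℝ≥0∞)⁻¹
      ≤ (k:ℝ≥0∞)^k * ((k:ℝ≥0∞)^k *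
        (∑' m : ℕ+, ((m:ℕ) : ℝ≥0∞) ^ (-(1+1/(2*(k:ℝ))))) ^ (k+k)) := by
  classical
  set ε : ℝ := 1 / (2 * (k:ℝ)) with hεdef
  have hεpos : 0 < ε := by
    have : (0:ℝ) < (k:ℝ) := by exact_mod_cast hk
    positivity
  have hk0 : (k : ℝ≥0∞) ≠ 0 := Nat.cast_ne_zero.mpr hk.ne'
  have hktop : (k : ℝ≥0∞) ≠ ⊤ := ENNReal.natCast_ne_top k
  set T := {s : Fin (k + k) → ℕ+ //
      ∀ i, ∑ j ∈ A i, (s (Fin.castAdd k j) : ℕ) =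
        ∑ j ∈ B i, (s (Fin.natAdd k j) : ℕ)} with hT
  -- the max index in each B-block
  have hMex : ∀ (s : T) (i : Fin ℓ), ∃ j, j ∈ B i ∧
      ∀ j' ∈ B i, (s.1 (Fin.natAdd k j') : ℕ) ≤ (s.1 (Fin.natAdd k j) : ℕ) :=
    fun s i => (B i).exists_max_image _ (hB i)
  choose M hMmem hMmax using hMex
  set D : T → Finset (Fin (k+k)) :=
    fun s => Finset.univ.image (fun i => Fin.natAdd k (M s i)) with hD
  set s' : T → Fin (k+k) → ℕ+ := fun s t => if t ∈ D s then 1 else s.1 t with hs'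
  set Ψ : T → (Fin ℓ → Fin k) × (Fin (k+k) → ℕ+) := fun s => (M s, s' s) with hΨ
  -- the block of an index
  set blk : Fin (k+k) → Fin ℓ :=
    Fin.addCases (fun j => (hAu j).choose) (fun j => (hBu j).choose) with hblk
  have hblkA : ∀ (j : Fin k) (i : Fin ℓ), blk (Fin.castAdd k j) = i ↔ j ∈ A i := by
    intro j i
    have hred : blk (Fin.castAdd k j) = (hAu j).choose := by
      simp only [hblk]; exact Fin.addCases_left j
    constructor
    · intro h; rw [← h, hred]; exact (hAu j).choose_spec.1
    · intro hj; rw [hred]; exact ((hAu j).choose_spec.2 i hj).symm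
  have hblkB : ∀ (j : Fin k) (i : Fin ℓ), blk (Fin.natAdd k j) = i ↔ j ∈ B i := by
    intro j i
    have hred : blk (Fin.natAdd k j) = (hBu j).choose := by
      simp only [hblk]; exact Fin.addCases_right j
    constructor
    · intro h; rw [← h, hred]; exact (hBu j).choose_spec.1
    · intro hj; rw [hred]; exact ((hBu j).choose_spec.2 i hj).symm
  -- block sums
  set nn : T → Fin ℓ → ℕ := fun s i => ∑ j ∈ A i, (s.1 (Fin.castAdd k j) : ℕ) with hnn
  have hcons : ∀ (s : T) (i : Fin ℓ),
      nn s i = ∑ j ∈ B i, (s.1 (Fin.natAdd k j) : ℕ) := fun s i => s.2 i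
  have hblk_le : ∀ (s : T) (i : Fin ℓ) (t : Fin (k+k)), blk t = i → (s.1 t : ℕ) ≤ nn s i := by
    intro s i t
    induction t using Fin.addCases with
    | left j =>
      intro h
      exact Finset.single_le_sum (f := fun j => (s.1 (Fin.castAdd k j) : ℕ))
        (fun _ _ => Nat.zero_le _) ((hblkA j i).mp h)
    | right j =>
      intro h
      rw [hcons]
      exact Finset.single_le_sum (f := fun j => (s.1 (Fin.natAdd k j) : ℕ))
        (fun _ _ => Nat.zero_le _) ((hblkB j i).mp h)
  have hnn_le : ∀ (s : T) (i : Fin ℓ),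
      nn s i ≤ k * (s.1 (Fin.natAdd k (M s i)) : ℕ) := by
    intro s i
    rw [hcons]
    have hcard : (B i).card ≤ k := le_trans (Finset.card_le_univ _) (by simp)
    have h1 := Finset.sum_le_card_nsmul (B i) _ _ (fun j hj => hMmax s i j hj)
    simp only [smul_eq_mul] at h1
    exact h1.trans (Nat.mul_le_mul_right _ hcard)
  have hnn_pos : ∀ (s : T) (i : Fin ℓ), 1 ≤ nn s i := by
    intro s i
    rw [hcons s i]
    obtain ⟨j0, hj0⟩ := hB i
    calc 1 ≤ (s.1 (Fin.natAdd k j0) : ℕ) := (s.1 (Fin.natAdd k j0)).pos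
      _ ≤ _ := Finset.single_le_sum (f := fun j => (s.1 (Fin.natAdd k j) : ℕ))
          (fun _ _ => Nat.zero_le _) hj0
  have hMinj : ∀ s : T, Function.Injective (M s) := by
    intro s i i' h
    exact (hBu (M s i)).unique (hMmem s i) (h ▸ hMmem s i')
  have hna_inj : Function.Injective (Fin.natAdd k : Fin k → Fin (k+k)) := by
    intro a b h
    have := Fin.val_eq_of_eq h
    simp [Fin.ext_iff] at this ⊢
    omega
  have hca_ne_na : ∀ (a b : Fin k), Fin.castAdd k a ≠ Fin.natAdd k b := by
    intro a b h
    have := Fin.val_eq_of_eq h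
    have ha := a.isLt
    simp at this
    omega
  have hcaD : ∀ (s : T) (j : Fin k), Fin.castAdd k j ∉ D s := by
    intro s j hmem
    obtain ⟨i, -, hi⟩ := Finset.mem_image.mp hmem
    exact hca_ne_na j (M s i) hi.symm
  have hnaD : ∀ (s : T) (j : Fin k) (i : Fin ℓ), j ∈ B i → j ≠ M s i →
      Fin.natAdd k j ∉ D s := by
    intro s j i hj hne hmem
    obtain ⟨i', -, hi'⟩ := Finset.mem_image.mp hmem
    have hj' : j = M s i' := hna_inj hi'.symm
    have hii : i' = i := (hBu j).unique (hj' ▸ hMmem s i') hj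
    exact hne (by rw [hj', hii])
  have hΨinj : Function.Injective Ψ := by
    intro s₁ s₂ h
    have hM12 : M s₁ = M s₂ := congrArg Prod.fst h
    have hs12 : s' s₁ = s' s₂ := congrArg Prod.snd h
    have hD12 : D s₁ = D s₂ := by simp only [hD]; rw [hM12]
    have hoff : ∀ t, t ∉ D s₁ → s₁.1 t = s₂.1 t := by
      intro t ht
      have h1 : s' s₁ t = s₁.1 t := by simp only [hs']; rw [if_neg ht]
      have h2 : s' s₂ t = s₂.1 t := by simp only [hs']; rw [if_neg (hD12 ▸ ht)]
      rw [← h1, hs12, h2]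
    have hnn12 : ∀ i, nn s₁ i = nn s₂ i := by
      intro i
      simp only [hnn]
      exact Finset.sum_congr rfl fun j _ => by rw [hoff _ (hcaD s₁ j)]
    apply Subtype.ext
    funext t
    by_cases ht : t ∈ D s₁
    · obtain ⟨i, -, rfl⟩ := Finset.mem_image.mp ht
      have hBsum : ∑ j ∈ B i, (s₁.1 (Fin.natAdd k j) : ℕ)
          = ∑ j ∈ B i, (s₂.1 (Fin.natAdd k j) : ℕ) := by
        rw [← hcons s₁ i, ← hcons s₂ i, hnn12]
      have hmem1 : M s₁ i ∈ B i := hMmem s₁ i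
      rw [← Finset.add_sum_erase _ _ hmem1, ← Finset.add_sum_erase _ _ hmem1] at hBsum
      have herase : ∑ j ∈ (B i).erase (M s₁ i), (s₁.1 (Fin.natAdd k j) : ℕ)
          = ∑ j ∈ (B i).erase (M s₁ i), (s₂.1 (Fin.natAdd k j) : ℕ) := by
        apply Finset.sum_congr rfl
        intro j hj
        rw [hoff _ (hnaD s₁ j i (Finset.mem_of_mem_erase hj) (Finset.ne_of_mem_erase hj))]
      have hval : (s₁.1 (Fin.natAdd k (M s₁ i)) : ℕ) = (s₂.1 (Fin.natAdd k (M s₁ i)) : ℕ) := by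
        omega
      exact PNat.coe_injective hval
    · exact hoff t ht
  -- pointwise bound
  have hpt : ∀ s : T, (∏ t : Fin (k+k), ((s.1 t : ℕ) : ℝ≥0∞)⁻¹)
      ≤ (k:ℝ≥0∞)^ℓ * ∏ t : Fin (k+k), ((s' s t : ℕ) : ℝ≥0∞) ^ (-(1+ε)) := by
    intro s
    set e : Fin (k+k) → ℝ≥0∞ := fun t => ((s.1 t : ℕ) : ℝ≥0∞) with he
    set e' : Fin (k+k) → ℝ≥0∞ := fun t => ((s' s t : ℕ) : ℝ≥0∞) with he'
    have he'0 : ∀ t, e' t ≠ 0 := by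
      intro t
      simp only [he']
      exact_mod_cast Nat.cast_ne_zero.mpr (s' s t).pos.ne'
    have he'top : ∀ t, e' t ≠ ⊤ := fun t => ENNReal.natCast_ne_top _
    have he'le : ∀ t, e' t ≤ e t := by
      intro t
      simp only [he', he, hs']
      split
      · exact_mod_cast (s.1 t).one_le
      · exact le_rfl
    have hDinj : Set.InjOn (fun i => Fin.natAdd k (M s i)) ↑(Finset.univ : Finset (Fin ℓ)) :=
      fun i _ i' _ h => hMinj s (hna_inj h)
    have hstep1 : ∏ t, (e t)⁻¹
        = (∏ t, (e' t)⁻¹) * ∏ i : Fin ℓ, (e (Fin.natAdd k (M s i)))⁻¹ := by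
      have h1 : ∏ t ∈ D s, (e t)⁻¹ = ∏ i : Fin ℓ, (e (Fin.natAdd k (M s i)))⁻¹ := by
        simp only [hD]
        exact Finset.prod_image (fun i _ i' _ h => hMinj s (hna_inj h))
      have h2 : ∏ t, (e' t)⁻¹ = ∏ t ∈ (D s)ᶜ, (e t)⁻¹ := by
        rw [← Finset.prod_mul_prod_compl (D s) (fun t => (e' t)⁻¹)]
        have h3 : ∏ t ∈ D s, (e' t)⁻¹ = 1 := by
          apply Finset.prod_eq_one
          intro t ht
          simp only [he', hs']
          rw [if_pos ht]
          simp
        rw [h3, one_mul]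
        apply Finset.prod_congr rfl
        intro t ht
        simp only [he', he, hs']
        rw [if_neg (Finset.mem_compl.mp ht)]
      rw [← h1, h2, mul_comm, ← Finset.prod_mul_prod_compl (D s) (fun t => (e t)⁻¹)]
    have hstep2 : ∀ i : Fin ℓ, (e (Fin.natAdd k (M s i)))⁻¹
        ≤ (k:ℝ≥0∞) * ∏ t ∈ Finset.univ.filter (fun t => blk t = i), (e t) ^ (-ε) := by
      intro i
      set c := (Finset.univ.filter (fun t => blk t = i)).card with hc
      have hcle : c ≤ k + k := le_trans (Finset.card_filter_le _ _) (by simp)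
      have hcε : (c:ℝ) * ε ≤ 1 := by
        rw [hεdef, mul_one_div, div_le_one (by positivity : (0:ℝ) < 2 * (k:ℝ))]
        have : (c:ℝ) ≤ ((k + k : ℕ) : ℝ) := by exact_mod_cast hcle
        push_cast at this ⊢
        linarith
      have hnne : (1:ℝ≥0∞) ≤ (nn s i : ℝ≥0∞) := by exact_mod_cast hnn_pos s i
      have hnn0 : (nn s i : ℝ≥0∞) ≠ 0 := by
        exact_mod_cast Nat.cast_ne_zero.mpr (Nat.one_le_iff_ne_zero.mp (hnn_pos s i))
      have hnntop : (nn s i : ℝ≥0∞) ≠ ⊤ := ENNReal.natCast_ne_top _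
      have hle1 : (e (Fin.natAdd k (M s i)))⁻¹ ≤ (k:ℝ≥0∞) * ((nn s i : ℝ≥0∞))⁻¹ := by
        have hcast : ((nn s i : ℝ≥0∞)) ≤ (k:ℝ≥0∞) * e (Fin.natAdd k (M s i)) := by
          simp only [he]
          rw [← Nat.cast_mul]
          exact_mod_cast hnn_le s i
        calc (e (Fin.natAdd k (M s i)))⁻¹
            = ((k:ℝ≥0∞) * (k:ℝ≥0∞)⁻¹) * (e (Fin.natAdd k (M s i)))⁻¹ := by
              rw [ENNReal.mul_inv_cancel hk0 hktop, one_mul]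
          _ = (k:ℝ≥0∞) * ((k:ℝ≥0∞) * e (Fin.natAdd k (M s i)))⁻¹ := by
              rw [ENNReal.mul_inv (Or.inl hk0) (Or.inl hktop), mul_assoc]
          _ ≤ (k:ℝ≥0∞) * ((nn s i : ℝ≥0∞))⁻¹ :=
              mul_le_mul_right (ENNReal.inv_le_inv.mpr hcast) _
      have hle2 : ((nn s i : ℝ≥0∞))⁻¹
          ≤ ∏ t ∈ Finset.univ.filter (fun t => blk t = i), (e t) ^ (-ε) := by
        have hd : ((nn s i : ℝ≥0∞))⁻¹
            = (nn s i : ℝ≥0∞) ^ (-((c:ℝ)*ε)) * (nn s i : ℝ≥0∞) ^ (-(1-(c:ℝ)*ε)) := by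
          rw [← ENNReal.rpow_add _ _ hnn0 hnntop,
            show -((c:ℝ)*ε) + -(1-(c:ℝ)*ε) = -1 by ring, ENNReal.rpow_neg_one]
        rw [hd]
        have hb1 : (nn s i : ℝ≥0∞) ^ (-(1-(c:ℝ)*ε)) ≤ 1 := by
          calc (nn s i : ℝ≥0∞) ^ (-(1-(c:ℝ)*ε))
              ≤ (nn s i : ℝ≥0∞) ^ (0:ℝ) :=
                ENNReal.rpow_le_rpow_of_exponent_le hnne (by linarith)
            _ = 1 := ENNReal.rpow_zero
        calc (nn s i : ℝ≥0∞) ^ (-((c:ℝ)*ε)) * (nn s i : ℝ≥0∞) ^ (-(1-(c:ℝ)*ε))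
            ≤ (nn s i : ℝ≥0∞) ^ (-((c:ℝ)*ε)) * 1 := mul_le_mul_right hb1 _
          _ = (nn s i : ℝ≥0∞) ^ (-((c:ℝ)*ε)) := mul_one _
          _ = ((nn s i : ℝ≥0∞) ^ (-ε)) ^ c := by
              rw [← ENNReal.rpow_natCast ((nn s i : ℝ≥0∞) ^ (-ε)) c, ← ENNReal.rpow_mul]
              congr 1
              ring
          _ = ∏ _t ∈ Finset.univ.filter (fun t => blk t = i), (nn s i : ℝ≥0∞) ^ (-ε) := by
              rw [Finset.prod_const, hc]
          _ ≤ ∏ t ∈ Finset.univ.filter (fun t => blk t = i), (e t) ^ (-ε) := by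
              apply Finset.prod_le_prod'
              intro t ht
              have hle : e t ≤ (nn s i : ℝ≥0∞) := by
                simp only [he]
                exact_mod_cast hblk_le s i t (by simpa using (Finset.mem_filter.mp ht).2)
              rw [ENNReal.rpow_neg, ENNReal.rpow_neg]
              exact ENNReal.inv_le_inv.mpr (ENNReal.rpow_le_rpow hle hεpos.le)
      calc (e (Fin.natAdd k (M s i)))⁻¹ ≤ (k:ℝ≥0∞) * ((nn s i : ℝ≥0∞))⁻¹ := hle1
        _ ≤ (k:ℝ≥0∞) * ∏ t ∈ Finset.univ.filter (fun t => blk t = i), (e t) ^ (-ε) :=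
            mul_le_mul_right hle2 _
    calc ∏ t, (e t)⁻¹
        = (∏ t, (e' t)⁻¹) * ∏ i : Fin ℓ, (e (Fin.natAdd k (M s i)))⁻¹ := hstep1
      _ ≤ (∏ t, (e' t)⁻¹) * ∏ i : Fin ℓ,
            ((k:ℝ≥0∞) * ∏ t ∈ Finset.univ.filter (fun t => blk t = i), (e t) ^ (-ε)) :=
          mul_le_mul_right (Finset.prod_le_prod' fun i _ => hstep2 i) _
      _ = (∏ t, (e' t)⁻¹) * ((k:ℝ≥0∞)^ℓ * ∏ t, (e t) ^ (-ε)) := by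
          rw [Finset.prod_mul_distrib, Finset.prod_const, Finset.card_univ, Fintype.card_fin,
            Finset.prod_fiberwise Finset.univ blk (fun t => (e t) ^ (-ε))]
      _ ≤ (∏ t, (e' t)⁻¹) * ((k:ℝ≥0∞)^ℓ * ∏ t, (e' t) ^ (-ε)) := by
          apply mul_le_mul_right
          apply mul_le_mul_right
          apply Finset.prod_le_prod'
          intro t _
          rw [ENNReal.rpow_neg, ENNReal.rpow_neg]
          exact ENNReal.inv_le_inv.mpr (ENNReal.rpow_le_rpow (he'le t) hεpos.le)
      _ = (k:ℝ≥0∞)^ℓ * ∏ t, (e' t) ^ (-(1+ε)) := by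
          rw [← mul_assoc, mul_comm (∏ t, (e' t)⁻¹) ((k:ℝ≥0∞)^ℓ), mul_assoc,
            ← Finset.prod_mul_distrib]
          congr 1
          apply Finset.prod_congr rfl
          intro t _
          rw [show -(1+ε) = (-1) + (-ε) by ring,
            ENNReal.rpow_add _ _ (he'0 t) (he'top t), ENNReal.rpow_neg_one]
  -- assemble
  set G : (Fin ℓ → Fin k) × (Fin (k+k) → ℕ+) → ℝ≥0∞ :=
    fun x => ∏ t, ((x.2 t : ℕ) : ℝ≥0∞) ^ (-(1+ε)) with hG
  set Z : ℝ≥0∞ := ∑' m : ℕ+, ((m:ℕ) : ℝ≥0∞) ^ (-(1+ε)) with hZdef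
  have hsum : ∑' x : (Fin ℓ → Fin k) × (Fin (k+k) → ℕ+), G x = (k:ℝ≥0∞)^ℓ * Z^(k+k) := by
    calc ∑' x : (Fin ℓ → Fin k) × (Fin (k+k) → ℕ+), G x
        = ∑' (_J : Fin ℓ → Fin k), ∑' (t : Fin (k+k) → ℕ+),
            ∏ u, ((t u : ℕ) : ℝ≥0∞) ^ (-(1+ε)) :=
          ENNReal.tsum_prod (f := fun (_J : Fin ℓ → Fin k) (t : Fin (k+k) → ℕ+) =>
            ∏ u, ((t u : ℕ) : ℝ≥0∞) ^ (-(1+ε)))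
      _ = ∑' (_J : Fin ℓ → Fin k), Z^(k+k) := by
          apply tsum_congr
          intro J
          exact tsum_pi_prod (fun m => ((m:ℕ) : ℝ≥0∞) ^ (-(1+ε))) (k+k)
      _ = (k:ℝ≥0∞)^ℓ * Z^(k+k) := by
          rw [tsum_fintype]
          rw [Finset.sum_const, Finset.card_univ]
          rw [nsmul_eq_mul]
          congr 1
          rw [Fintype.card_fun]
          push_cast
          simp
  have hmain : ∑' s : T, ∏ t : Fin (k+k), ((s.1 t : ℕ) : ℝ≥0∞)⁻¹
      ≤ (k:ℝ≥0∞)^ℓ * ((k:ℝ≥0∞)^ℓ * Z^(k+k)) := by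
    calc ∑' s : T, ∏ t : Fin (k+k), ((s.1 t : ℕ) : ℝ≥0∞)⁻¹
        ≤ ∑' s : T, (k:ℝ≥0∞)^ℓ * G (Ψ s) := ENNReal.tsum_le_tsum (fun s => hpt s)
      _ = (k:ℝ≥0∞)^ℓ * ∑' s : T, G (Ψ s) := ENNReal.tsum_mul_left
      _ ≤ (k:ℝ≥0∞)^ℓ * ∑' x, G x :=
          mul_le_mul_right (ENNReal.tsum_comp_le_tsum_of_injective hΨinj G) _
      _ = (k:ℝ≥0∞)^ℓ * ((k:ℝ≥0∞)^ℓ * Z^(k+k)) := by rw [hsum]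
  have hkpow : (k:ℝ≥0∞)^ℓ ≤ (k:ℝ≥0∞)^k := by
    apply pow_le_pow_right₀ _ hlk
    exact_mod_cast Nat.one_le_cast.mpr hk
  calc ∑' s : T, ∏ t : Fin (k+k), ((s.1 t : ℕ) : ℝ≥0∞)⁻¹
      ≤ (k:ℝ≥0∞)^ℓ * ((k:ℝ≥0∞)^ℓ * Z^(k+k)) := hmain
    _ ≤ (k:ℝ≥0∞)^k * ((k:ℝ≥0∞)^k * Z^(k+k)) :=
        mul_le_mul' hkpow (mul_le_mul' hkpow le_rfl)

theorem constrained_harmonic_sum_bounded (k : ℕ) (hk : 0 < k) :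
    ∃ C : ℝ, ∀ ℓ : ℕ, 1 ≤ ℓ → ℓ ≤ k → ∀ A B : Fin ℓ → Finset (Fin k),
      (∀ i, (A i).Nonempty) → (∀ x : Fin k, ∃! i, x ∈ A i) →
      (∀ i, (B i).Nonempty) → (∀ x : Fin k, ∃! i, x ∈ B i) →
      Summable (fun s : {s : Fin (k + k) → ℕ+ //
          ∀ i, ∑ j ∈ A i, (s (Fin.castAdd k j) : ℕ) =
            ∑ j ∈ B i, (s (Fin.natAdd k j) : ℕ)} =>
        ∏ j, (1 / ((s : Fin (k + k) → ℕ+) j : ℝ))) ∧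
      (∑' s : {s : Fin (k + k) → ℕ+ //
          ∀ i, ∑ j ∈ A i, (s (Fin.castAdd k j) : ℕ) =
            ∑ j ∈ B i, (s (Fin.natAdd k j) : ℕ)},
        ∏ j, (1 / ((s : Fin (k + k) → ℕ+) j : ℝ))) ≤ C := by
  classical
  set ε : ℝ := 1 / (2 * (k:ℝ)) with hεdef
  have hεpos : 0 < ε := by
    have : (0:ℝ) < (k:ℝ) := by exact_mod_cast hk
    positivity
  set Z : ℝ≥0∞ := ∑' m : ℕ+, ((m:ℕ) : ℝ≥0∞) ^ (-(1+ε)) with hZdef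
  have hZ : Z ≠ ⊤ := pnat_rpow_tsum_ne_top (by linarith)
  set E : ℝ≥0∞ := (k:ℝ≥0∞)^k * ((k:ℝ≥0∞)^k * Z^(k+k)) with hEdef
  have hE : E ≠ ⊤ := by
    apply ENNReal.mul_ne_top (ENNReal.pow_ne_top (ENNReal.natCast_ne_top k))
    exact ENNReal.mul_ne_top (ENNReal.pow_ne_top (ENNReal.natCast_ne_top k))
      (ENNReal.pow_ne_top hZ)
  refine ⟨E.toReal, ?_⟩
  intro ℓ hl1 hlk A B hA hAu hB hBu
  have hkey := key_bound k hk ℓ hlk A B hAu hB hBu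
  rw [← hεdef, ← hZdef, ← hEdef] at hkey
  set F : {s : Fin (k + k) → ℕ+ //
      ∀ i, ∑ j ∈ A i, (s (Fin.castAdd k j) : ℕ) =
        ∑ j ∈ B i, (s (Fin.natAdd k j) : ℕ)} → ℝ≥0∞ :=
    fun s => ∏ t : Fin (k+k), ((s.1 t : ℕ) : ℝ≥0∞)⁻¹ with hF
  have hFne : ∀ s, F s ≠ ⊤ := by
    intro s
    simp only [hF]
    apply (ENNReal.prod_lt_top ?_).ne
    intro t _
    exact ENNReal.inv_lt_top.mpr (by exact_mod_cast Nat.cast_pos.mpr (s.1 t).pos)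
  have hFtsum : ∑' s, F s ≠ ⊤ := ne_top_of_le_ne_top hE hkey
  have hfF : (fun s : {s : Fin (k + k) → ℕ+ //
      ∀ i, ∑ j ∈ A i, (s (Fin.castAdd k j) : ℕ) =
        ∑ j ∈ B i, (s (Fin.natAdd k j) : ℕ)} =>
      ∏ j, (1 / ((s : Fin (k + k) → ℕ+) j : ℝ))) = fun s => (F s).toReal := by
    funext s
    simp only [hF]
    rw [ENNReal.toReal_prod]
    apply Finset.prod_congr rfl
    intro j _
    rw [ENNReal.toReal_inv, ENNReal.toReal_natCast, one_div]
  constructor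
  · rw [hfF]
    exact ENNReal.summable_toReal hFtsum
  · rw [hfF]
    calc ∑' s, (F s).toReal = (∑' s, F s).toReal := (ENNReal.tsum_toReal_eq hFne).symm
      _ ≤ E.toReal := ENNReal.toReal_mono hE hkey
end

section
/- There exists a constant C > 0 such that for every positive integer d and every real N ≥ d², | (1/v(d)) ∑_{0 ≤ m ≤ N} r₃(m d²) − (4π/3)(N/d²)^{3/2} | ≤ C N / d². -/
open Real Finset

/-- `r₃(n)`: number of representations of `n` as a sum of three squares of integers. -/
noncomputable def r3 (n : ℕ) : ℕ :=
  Set.ncard {t : ℤ × ℤ × ℤ | t.1^2 + t.2.1^2 + t.2.2^2 = (n : ℤ)}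

open MeasureTheory
set_option maxHeartbeats 1000000


lemma volume_Bset {r : ℝ} (hr : 0 ≤ r) :
    volume {y : Fin 3 → ℝ | y 0 ^ 2 + y 1 ^ 2 + y 2 ^ 2 ≤ r ^ 2} =
      ENNReal.ofReal ((4 * π / 3) * r ^ 3) := by
  have hmp := (EuclideanSpace.volume_preserving_symm_measurableEquiv_toLp (Fin 3))
  have hset : (MeasurableEquiv.toLp 2 (Fin 3 → ℝ)).symm ⁻¹'
      {y : Fin 3 → ℝ | y 0 ^ 2 + y 1 ^ 2 + y 2 ^ 2 ≤ r ^ 2} =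
      Metric.closedBall (0 : EuclideanSpace ℝ (Fin 3)) r := by
    ext y
    change (y 0 ^ 2 + y 1 ^ 2 + y 2 ^ 2 ≤ r ^ 2) ↔ y ∈ Metric.closedBall (0 : EuclideanSpace ℝ (Fin 3)) r
    simp only [Set.mem_preimage, Set.mem_setOf_eq, Metric.mem_closedBall, dist_zero_right,
      EuclideanSpace.norm_eq]
    rw [Fin.sum_univ_three]
    constructor
    · intro h
      have h0 : Real.sqrt (r^2) = r := by rw [Real.sqrt_sq hr]
      rw [← h0]
      apply Real.sqrt_le_sqrt
      simpa [sq_abs] using h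
    · intro h
      have h2 : (Real.sqrt (‖y 0‖ ^ 2 + ‖y 1‖ ^ 2 + ‖y 2‖ ^ 2))^2 ≤ r ^ 2 := by
        apply sq_le_sq' _ h
        linarith [Real.sqrt_nonneg (‖y 0‖ ^ 2 + ‖y 1‖ ^ 2 + ‖y 2‖ ^ 2)]
      rw [Real.sq_sqrt (by positivity)] at h2
      simpa [sq_abs] using h2
  have hmb : MeasurableSet {y : Fin 3 → ℝ | y 0 ^ 2 + y 1 ^ 2 + y 2 ^ 2 ≤ r ^ 2} := by
    apply measurableSet_le <;> fun_prop
  rw [← hmp.measure_preimage hmb.nullMeasurableSet, hset,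
    EuclideanSpace.volume_closedBall]
  simp only [Fintype.card_fin, Nat.cast_ofNat]
  have hg : Real.Gamma ((3:ℝ)/2 + 1) = 3/4 * Real.sqrt π := by
    rw [Real.Gamma_add_one (by norm_num)]
    rw [show (3:ℝ)/2 = 1/2 + 1 by norm_num, Real.Gamma_add_one (by norm_num),
      Real.Gamma_one_half_eq]
    ring
  rw [hg, ← ENNReal.ofReal_pow hr, ← ENNReal.ofReal_mul (by positivity)]
  congr 1
  have hs : Real.sqrt π * Real.sqrt π = π := Real.mul_self_sqrt Real.pi_nonneg
  have hsne : Real.sqrt π ≠ 0 := by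
    positivity
  have h3 : Real.sqrt π ^ 3 = π * Real.sqrt π := by
    rw [pow_succ, sq, hs]
  rw [h3]
  field_simp


noncomputable def ecoord (t : ℤ × ℤ × ℤ) : Fin 3 → ℝ := ![(t.1 : ℝ), (t.2.1 : ℝ), (t.2.2 : ℝ)]

def cube (D : ℕ) (t : ℤ × ℤ × ℤ) : Set (Fin 3 → ℝ) :=
  Set.pi Set.univ (fun i => Set.Ico (ecoord t i) (ecoord t i + D))

lemma cube_measurable (D : ℕ) (t : ℤ × ℤ × ℤ) : MeasurableSet (cube D t) :=
  MeasurableSet.univ_pi (fun _ => measurableSet_Ico)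

lemma cube_volume (D : ℕ) (t : ℤ × ℤ × ℤ) :
    volume (cube D t) = ENNReal.ofReal ((D:ℝ)^3) := by
  rw [cube, volume_pi_pi]
  simp only [Real.volume_Ico, add_sub_cancel_left]
  rw [Finset.prod_const, ← ENNReal.ofReal_pow (by positivity)]
  simp

lemma cube_disjoint {D : ℕ} (hD : 0 < D) {t s : ℤ × ℤ × ℤ}
    (h1 : (D:ℤ) ∣ (t.1 - s.1)) (h2 : (D:ℤ) ∣ (t.2.1 - s.2.1)) (h3 : (D:ℤ) ∣ (t.2.2 - s.2.2))
    (hne : t ≠ s) : Disjoint (cube D t) (cube D s) := by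
  have key : ∀ i : Fin 3, (D:ℤ) ∣ ((fun i => ![t.1, t.2.1, t.2.2] i) i - ![s.1, s.2.1, s.2.2] i) := by
    intro i; fin_cases i <;> simpa
  have hne' : ∃ i : Fin 3, ![t.1, t.2.1, t.2.2] i ≠ ![s.1, s.2.1, s.2.2] i := by
    by_contra h
    push_neg at h
    apply hne
    have e0 := h 0; have e1 := h 1; have e2 := h 2
    simp at e0 e1 e2
    exact Prod.ext e0 (Prod.ext e1 e2)
  obtain ⟨i, hi⟩ := hne'
  rw [Set.disjoint_left]
  intro y hyt hys
  have ht := hyt i (Set.mem_univ i)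
  have hs := hys i (Set.mem_univ i)
  have hd : (D:ℝ) ≤ |(![t.1, t.2.1, t.2.2] i : ℝ) - (![s.1, s.2.1, s.2.2] i : ℝ)| := by
    rw [show ((![t.1, t.2.1, t.2.2] i : ℤ) : ℝ) - ((![s.1, s.2.1, s.2.2] i : ℤ) : ℝ)
        = (((![t.1, t.2.1, t.2.2] i - ![s.1, s.2.1, s.2.2] i : ℤ)) : ℝ) by push_cast; ring,
      ← Int.cast_abs, ← Int.cast_natCast (R := ℝ)]
    exact_mod_cast Int.le_of_dvd (abs_pos.mpr (sub_ne_zero.mpr hi)) ((dvd_abs _ _).mpr (key i))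
  have hcoord : ∀ u : ℤ × ℤ × ℤ, ecoord u i = ((![u.1, u.2.1, u.2.2] i : ℤ) : ℝ) := by
    intro u; fin_cases i <;> simp [ecoord]
  simp only [Set.mem_Ico, hcoord t, hcoord s] at ht hs
  rcases le_abs.mp hd with h | h <;> linarith [ht.1, ht.2, hs.1, hs.2]



lemma floor_step (D : ℕ) (hD : 0 < (D:ℝ)) (u : ℝ) (cc : ℤ) :
    ((cc + D * ⌊(u - cc)/D⌋ : ℤ) : ℝ) ≤ u ∧ u < ((cc + D * ⌊(u - cc)/D⌋ : ℤ) : ℝ) + D := by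
  have h1 := (le_div_iff₀ hD).mp (Int.floor_le ((u - cc)/D))
  have h2 := (div_lt_iff₀ hD).mp (Int.lt_floor_add_one ((u - cc)/D))
  constructor
  · push_cast; nlinarith
  · push_cast; nlinarith

lemma coset_count (D : ℕ) (hD : 0 < D) (c : ℤ × ℤ × ℤ) (R : ℝ) (hR : 0 ≤ R)
    (A : Finset (ℤ × ℤ × ℤ))
    (hA : ∀ t : ℤ × ℤ × ℤ, t ∈ A ↔ ((t.1:ℝ)^2 + (t.2.1:ℝ)^2 + (t.2.2:ℝ)^2 ≤ R^2 ∧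
      (D:ℤ) ∣ (t.1 - c.1) ∧ (D:ℤ) ∣ (t.2.1 - c.2.1) ∧ (D:ℤ) ∣ (t.2.2 - c.2.2))) :
    |(A.card : ℝ) * (D:ℝ)^3 - (4*π/3) * R^3| ≤ 2000 * (R^2 * D + (D:ℝ)^3) := by
  have hD' : (0:ℝ) < D := by exact_mod_cast hD
  -- pairwise disjoint
  have hdisj : (A : Set (ℤ × ℤ × ℤ)).PairwiseDisjoint (cube D) := by
    intro t ht s hs hne
    have h1 := ((hA t).mp ht).2
    have h2 := ((hA s).mp hs).2
    have d1 := dvd_sub h1.1 h2.1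
    have d2 := dvd_sub h1.2.1 h2.2.1
    have d3 := dvd_sub h1.2.2 h2.2.2
    rw [sub_sub_sub_cancel_right] at d1 d2 d3
    exact cube_disjoint hD d1 d2 d3 hne
  have hvol : volume (⋃ t ∈ A, cube D t) = ENNReal.ofReal ((A.card : ℝ) * (D:ℝ)^3) := by
    rw [measure_biUnion_finset hdisj (fun t _ => cube_measurable D t)]
    simp only [cube_volume, Finset.sum_const, nsmul_eq_mul]
    rw [ENNReal.ofReal_mul (by positivity), ENNReal.ofReal_natCast]
  -- upper bound
  have hsub : (⋃ t ∈ A, cube D t) ⊆ {y : Fin 3 → ℝ | y 0^2 + y 1^2 + y 2^2 ≤ (R + 3*D)^2} := by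
    intro y hy
    simp only [Set.mem_iUnion] at hy
    obtain ⟨t, ht, hyt⟩ := hy
    have hQ := ((hA t).mp ht).1
    have h0 := hyt 0 (Set.mem_univ 0)
    have h1 := hyt 1 (Set.mem_univ 1)
    have h2 := hyt 2 (Set.mem_univ 2)
    have e0 : ecoord t 0 = (t.1 : ℝ) := rfl
    have e1 : ecoord t 1 = (t.2.1 : ℝ) := rfl
    have e2 : ecoord t 2 = (t.2.2 : ℝ) := rfl
    simp only [Set.mem_Ico, e0, e1, e2] at h0 h1 h2
    set a0 := (t.1 : ℝ); set a1 := (t.2.1 : ℝ); set a2 := (t.2.2 : ℝ)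
    have ha0 : -R ≤ a0 ∧ a0 ≤ R := by
      constructor <;> nlinarith [sq_nonneg a1, sq_nonneg a2, sq_nonneg (a0 + R), sq_nonneg (a0 - R)]
    have ha1 : -R ≤ a1 ∧ a1 ≤ R := by
      constructor <;> nlinarith [sq_nonneg a0, sq_nonneg a2, sq_nonneg (a1 + R), sq_nonneg (a1 - R)]
    have ha2 : -R ≤ a2 ∧ a2 ≤ R := by
      constructor <;> nlinarith [sq_nonneg a0, sq_nonneg a1, sq_nonneg (a2 + R), sq_nonneg (a2 - R)]
    have key : ∀ a u : ℝ, -R ≤ a → a ≤ R → a ≤ u → u < a + D →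
        u^2 ≤ a^2 + 2*D*R + (D:ℝ)^2 := by
      intro a u hal har hau huad
      nlinarith [mul_nonneg (sub_nonneg.mpr hau) (show 0 ≤ 2*R + (D:ℝ) - (u + a) by linarith),
        mul_nonneg (show 0 ≤ (D:ℝ) - (u - a) by linarith) (show 0 ≤ 2*R + (D:ℝ) by linarith)]
    have b0 := key a0 (y 0) ha0.1 ha0.2 h0.1 h0.2
    have b1 := key a1 (y 1) ha1.1 ha1.2 h1.1 h1.2
    have b2 := key a2 (y 2) ha2.1 ha2.2 h2.1 h2.2
    show (y 0)^2 + (y 1)^2 + (y 2)^2 ≤ (R + 3*D)^2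
    nlinarith [sq_nonneg (D:ℝ), hD'.le, hR]
  have high : (A.card : ℝ) * (D:ℝ)^3 ≤ (4*π/3) * (R + 3*D)^3 := by
    have hmono : volume (⋃ t ∈ A, cube D t) ≤
        volume {y : Fin 3 → ℝ | y 0^2 + y 1^2 + y 2^2 ≤ (R + 3*D)^2} := measure_mono hsub
    rw [hvol, volume_Bset (by positivity)] at hmono
    have this := hmono
    exact (ENNReal.ofReal_le_ofReal_iff (by positivity)).mp this
  -- lower bound
  have low : (4*π/3) * (max (R - 3*D) 0)^3 ≤ (A.card : ℝ) * (D:ℝ)^3 := by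
    rcases le_or_gt (R - 3*D) 0 with hc | hc
    · rw [max_eq_right hc]
      norm_num
      positivity
    · rw [max_eq_left hc.le]
      set r := R - 3*(D:ℝ) with hrdef
      have hrpos : 0 < r := hc
      have hsub2 : {y : Fin 3 → ℝ | y 0^2 + y 1^2 + y 2^2 ≤ r^2} ⊆ ⋃ t ∈ A, cube D t := by
        intro y hy
        simp only [Set.mem_setOf_eq] at hy
        set t : ℤ × ℤ × ℤ := (c.1 + D * ⌊(y 0 - c.1)/D⌋, c.2.1 + D * ⌊(y 1 - c.2.1)/D⌋,
          c.2.2 + D * ⌊(y 2 - c.2.2)/D⌋) with htdef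
        have f0 := floor_step D hD' (y 0) c.1
        have f1 := floor_step D hD' (y 1) c.2.1
        have f2 := floor_step D hD' (y 2) c.2.2
        have hy0 : -r ≤ y 0 ∧ y 0 ≤ r := by
          constructor <;>
            nlinarith [sq_nonneg (y 1), sq_nonneg (y 2), sq_nonneg (y 0 + r), sq_nonneg (y 0 - r)]
        have hy1 : -r ≤ y 1 ∧ y 1 ≤ r := by
          constructor <;>
            nlinarith [sq_nonneg (y 0), sq_nonneg (y 2), sq_nonneg (y 1 + r), sq_nonneg (y 1 - r)]
        have hy2 : -r ≤ y 2 ∧ y 2 ≤ r := by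
          constructor <;>
            nlinarith [sq_nonneg (y 0), sq_nonneg (y 1), sq_nonneg (y 2 + r), sq_nonneg (y 2 - r)]
        have htA : t ∈ A := by
          rw [hA]
          refine ⟨?_, ⟨⌊(y 0 - c.1)/D⌋, by ring⟩, ⟨⌊(y 1 - c.2.1)/D⌋, by ring⟩,
            ⟨⌊(y 2 - c.2.2)/D⌋, by ring⟩⟩
          have key : ∀ u b : ℝ, -r ≤ u → u ≤ r → b ≤ u → u < b + D →
              b^2 ≤ u^2 + 2*D*r + (D:ℝ)^2 := by
            intro u b hul hur hbu hub
            nlinarith [mul_nonneg (sub_nonneg.mpr hbu) (show 0 ≤ 2*r + (D:ℝ) - (u + b) by linarith),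
              mul_nonneg (show 0 ≤ (D:ℝ) - (u - b) by linarith) (show 0 ≤ 2*r + (D:ℝ) by linarith),
              mul_nonneg (sub_nonneg.mpr hbu) (show 0 ≤ u - b by linarith)]
          have g0 := key (y 0) t.1 hy0.1 hy0.2 f0.1 f0.2
          have g1 := key (y 1) t.2.1 hy1.1 hy1.2 f1.1 f1.2
          have g2 := key (y 2) t.2.2 hy2.1 hy2.2 f2.1 f2.2
          have hRr : R = r + 3*D := by rw [hrdef]; ring
          rw [hRr]
          nlinarith [sq_nonneg (D:ℝ), hD'.le, hrpos.le]
        refine Set.mem_biUnion htA ?_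
        intro i _
        fin_cases i
        · exact ⟨f0.1, f0.2⟩
        · exact ⟨f1.1, f1.2⟩
        · exact ⟨f2.1, f2.2⟩
      have hmono : volume {y : Fin 3 → ℝ | y 0^2 + y 1^2 + y 2^2 ≤ r^2} ≤
          volume (⋃ t ∈ A, cube D t) := measure_mono hsub2
      rw [hvol, volume_Bset hrpos.le] at hmono
      exact (ENNReal.ofReal_le_ofReal_iff (by positivity)).mp hmono
  -- final arithmetic
  have hpi4 : π ≤ 4 := Real.pi_le_four
  have hpi0 : 0 < π := Real.pi_pos
  have hR2D : (0:ℝ) ≤ R^2*D := by positivity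
  have hD3 : (0:ℝ) ≤ (D:ℝ)^3 := by positivity
  have mul4 : ∀ X B : ℝ, 0 ≤ X → X ≤ B → (4*π/3)*X ≤ (16/3)*B := by
    intro X B h0 hB
    nlinarith [mul_le_mul_of_nonneg_right hpi4 h0]
  rw [abs_le]
  constructor
  · rcases le_or_gt (R - 3*D) 0 with hc | hc
    · have hcard : (0:ℝ) ≤ (A.card : ℝ) * (D:ℝ)^3 := by positivity
      have h1 : R^3 ≤ 3*D*R^2 := by
        nlinarith [mul_le_mul_of_nonneg_left (show R ≤ 3*(D:ℝ) by linarith) (sq_nonneg R)]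
      have h2 := mul4 (R^3) (3*D*R^2) (by positivity) h1
      nlinarith
    · rw [max_eq_left hc.le] at low
      have hX0 : (0:ℝ) ≤ R^3 - (R-3*D)^3 := by
        nlinarith [mul_nonneg hD'.le (sq_nonneg (R - 3/2*(D:ℝ))), sq_nonneg (D:ℝ),
          mul_nonneg hD'.le (sq_nonneg (D:ℝ))]
      have h1 : R^3 - (R-3*D)^3 ≤ 9*R^2*D + 27*(D:ℝ)^3 := by
        nlinarith [mul_nonneg hR (sq_nonneg (D:ℝ))]
      have h2 := mul4 (R^3 - (R-3*D)^3) (9*R^2*D + 27*(D:ℝ)^3) hX0 h1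
      nlinarith [low]
  · have hX0 : (0:ℝ) ≤ (R+3*D)^3 - R^3 := by
      nlinarith [mul_nonneg hD'.le (sq_nonneg (R + 3/2*(D:ℝ))), mul_nonneg hD'.le (sq_nonneg (D:ℝ))]
    have h1 : (R+3*D)^3 - R^3 ≤ 36*R^2*D + 54*(D:ℝ)^3 := by
      nlinarith [mul_nonneg hD'.le (sq_nonneg (R - (D:ℝ))), mul_nonneg hR (sq_nonneg (D:ℝ))]
    have h2 := mul4 ((R+3*D)^3 - R^3) (36*R^2*D + 54*(D:ℝ)^3) hX0 h1
    nlinarith [high]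

noncomputable def boxI (M : ℤ) : Finset (ℤ × ℤ × ℤ) := Finset.Icc (-M, -M, -M) (M, M, M)

lemma int_abs_le_sq (a : ℤ) : |a| ≤ a^2 := by
  rcases eq_or_ne a 0 with h | h
  · simp [h]
  · have h1 : 1 ≤ |a| := Int.one_le_abs h
    nlinarith [sq_abs a]

lemma mem_boxI {M : ℤ} {t : ℤ × ℤ × ℤ} (h : t.1^2 + t.2.1^2 + t.2.2^2 ≤ M) : t ∈ boxI M := by
  have a1 := abs_le.mp (le_trans (int_abs_le_sq t.1)
    (by nlinarith [sq_nonneg t.2.1, sq_nonneg t.2.2] : t.1^2 ≤ M))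
  have a2 := abs_le.mp (le_trans (int_abs_le_sq t.2.1)
    (by nlinarith [sq_nonneg t.1, sq_nonneg t.2.2] : t.2.1^2 ≤ M))
  have a3 := abs_le.mp (le_trans (int_abs_le_sq t.2.2)
    (by nlinarith [sq_nonneg t.1, sq_nonneg t.2.1] : t.2.2^2 ≤ M))
  simp only [boxI, Finset.mem_Icc, Prod.le_def]
  exact ⟨⟨a1.1, a2.1, a3.1⟩, a1.2, a2.2, a3.2⟩

lemma r3_eq (n : ℕ) (M : ℤ) (hM : (n:ℤ) ≤ M) :
    ((boxI M).filter (fun t => t.1^2 + t.2.1^2 + t.2.2^2 = (n : ℤ))).card = r3 n := by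
  rw [r3, ← Set.ncard_coe_finset]
  congr 1
  ext t
  simp only [Finset.coe_filter, Set.mem_setOf_eq]
  exact ⟨fun h => h.2, fun h => ⟨mem_boxI (h ▸ hM), h⟩⟩

lemma sum_r3_eq (d : ℕ) (hd : 0 < d) (N : ℝ) (hN : 0 ≤ N) :
    ∑ m ∈ Finset.range (⌊N⌋₊ + 1), r3 (m * d^2) =
      ((boxI ((⌊N⌋₊ : ℤ) * d^2)).filter (fun t => t.1^2 + t.2.1^2 + t.2.2^2 ≤ (⌊N⌋₊ : ℤ) * d^2 ∧
        ((d:ℤ)^2 ∣ t.1^2 + t.2.1^2 + t.2.2^2))).card := by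
  set M : ℤ := (⌊N⌋₊ : ℤ) * d^2 with hMdef
  have hd2 : (0:ℤ) < (d:ℤ)^2 := by positivity
  rw [Finset.card_eq_sum_card_fiberwise
    (f := fun t : ℤ × ℤ × ℤ => ((t.1^2 + t.2.1^2 + t.2.2^2) / (d:ℤ)^2).toNat)
    (t := Finset.range (⌊N⌋₊ + 1)) ?_]
  · apply Finset.sum_congr rfl
    intro m hm
    rw [Finset.mem_range] at hm
    rw [← r3_eq (m * d^2) M (by push_cast; nlinarith [hd2, (by omega : (m:ℤ) ≤ (⌊N⌋₊:ℤ))])]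
    congr 1
    rw [Finset.filter_filter]
    apply Finset.filter_congr
    intro t ht
    constructor
    · intro h
      have h' : t.1^2 + t.2.1^2 + t.2.2^2 = (m:ℤ) * (d:ℤ)^2 := by
        rw [h]; push_cast; ring
      have hle : t.1^2 + t.2.1^2 + t.2.2^2 ≤ M := by
        rw [h', hMdef]
        have : (m:ℤ) ≤ (⌊N⌋₊:ℤ) := by omega
        nlinarith [hd2]
      refine ⟨⟨hle, ⟨(m:ℤ), by rw [h']; ring⟩⟩, ?_⟩
      rw [h', mul_comm ((m:ℤ)) ((d:ℤ)^2), Int.mul_ediv_cancel_left _ (ne_of_gt hd2)]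
      simp
    · rintro ⟨⟨hle, ⟨k, hk⟩⟩, htn⟩
      have hk0 : 0 ≤ k := by nlinarith [sq_nonneg t.1, sq_nonneg t.2.1, sq_nonneg t.2.2]
      rw [hk, Int.mul_ediv_cancel_left _ (ne_of_gt hd2)] at htn
      push_cast
      rw [hk, ← htn, Int.toNat_of_nonneg hk0]
      ring
  · intro t ht
    obtain ⟨hbox, ⟨hle, k, hk⟩⟩ := Finset.mem_filter.mp ht
    rw [Finset.mem_coe, Finset.mem_range]
    have hk0 : 0 ≤ k := by nlinarith [sq_nonneg t.1, sq_nonneg t.2.1, sq_nonneg t.2.2]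
    have hkle : k ≤ (⌊N⌋₊ : ℤ) := by nlinarith [hd2]
    show ((t.1^2 + t.2.1^2 + t.2.2^2) / (d:ℤ)^2).toNat < ⌊N⌋₊ + 1
    rw [hk, Int.mul_ediv_cancel_left _ (ne_of_gt hd2)]
    omega

def Vfin (d : ℕ) [NeZero (d^2)] : Finset (ZMod (d^2) × ZMod (d^2) × ZMod (d^2)) :=
  Finset.univ.filter (fun c => c.1^2 + c.2.1^2 + c.2.2^2 = 0)

def gmap (d : ℕ) (t : ℤ × ℤ × ℤ) : ZMod (d^2) × ZMod (d^2) × ZMod (d^2) :=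
  ((t.1 : ZMod (d^2)), (t.2.1 : ZMod (d^2)), (t.2.2 : ZMod (d^2)))

lemma vcount_eq (d : ℕ) [NeZero (d^2)] : vcount d = (Vfin d).card := by
  rw [vcount, Nat.card_eq_fintype_card, Vfin, Fintype.card_subtype]

lemma vcount_pos (d : ℕ) [NeZero (d^2)] : 0 < vcount d := by
  rw [vcount_eq]
  apply Finset.card_pos.mpr
  exact ⟨(0,0,0), by simp [Vfin]⟩

lemma fiber_iff (d : ℕ) (hd : 0 < d) [NeZero (d^2)] (N : ℝ) (hN : 0 ≤ N)
    (c : ZMod (d^2) × ZMod (d^2) × ZMod (d^2)) (hc : c ∈ Vfin d) (t : ℤ × ℤ × ℤ) :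
    t ∈ ((boxI ((⌊N⌋₊ : ℤ) * d^2)).filter
        (fun t => t.1^2 + t.2.1^2 + t.2.2^2 ≤ (⌊N⌋₊ : ℤ) * d^2 ∧
          ((d:ℤ)^2 ∣ t.1^2 + t.2.1^2 + t.2.2^2))).filter (fun t => gmap d t = c) ↔
      ((t.1:ℝ)^2 + (t.2.1:ℝ)^2 + (t.2.2:ℝ)^2 ≤ (Real.sqrt N * d)^2 ∧
        ((d^2 : ℕ):ℤ) ∣ (t.1 - (c.1.val : ℤ)) ∧ ((d^2 : ℕ):ℤ) ∣ (t.2.1 - (c.2.1.val : ℤ)) ∧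
        ((d^2 : ℕ):ℤ) ∣ (t.2.2 - (c.2.2.val : ℤ))) := by
  have hd2 : (0:ℤ) < (d:ℤ)^2 := by positivity
  have hcast : ((d^2 : ℕ):ℤ) = (d:ℤ)^2 := by push_cast; ring
  have hRsq : (Real.sqrt N * d)^2 = N * (d:ℝ)^2 := by
    rw [mul_pow, Real.sq_sqrt hN]
  have hv1 : (((c.1.val : ℤ)) : ZMod (d^2)) = c.1 := by
    push_cast [ZMod.natCast_val]; simp [ZMod.intCast_cast, ZMod.intCast_zmod_cast]
  have hv2 : (((c.2.1.val : ℤ)) : ZMod (d^2)) = c.2.1 := by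
    push_cast [ZMod.natCast_val]; simp [ZMod.intCast_cast, ZMod.intCast_zmod_cast]
  have hv3 : (((c.2.2.val : ℤ)) : ZMod (d^2)) = c.2.2 := by
    push_cast [ZMod.natCast_val]; simp [ZMod.intCast_cast, ZMod.intCast_zmod_cast]
  constructor
  · intro ht
    simp only [Finset.mem_filter] at ht
    obtain ⟨⟨hbox, hle, hdvd⟩, hg⟩ := ht
    have hg1 : (t.1 : ZMod (d^2)) = c.1 := congrArg Prod.fst hg
    have hg2 : (t.2.1 : ZMod (d^2)) = c.2.1 := congrArg (fun p => p.2.1) hg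
    have hg3 : (t.2.2 : ZMod (d^2)) = c.2.2 := congrArg (fun p => p.2.2) hg
    refine ⟨?_, ?_, ?_, ?_⟩
    · rw [hRsq]
      have : ((t.1^2 + t.2.1^2 + t.2.2^2 : ℤ) : ℝ) ≤ (((⌊N⌋₊ : ℤ) * d^2 : ℤ) : ℝ) := by
        exact_mod_cast hle
      push_cast at this
      have hfl : (⌊N⌋₊ : ℝ) ≤ N := Nat.floor_le hN
      nlinarith [sq_nonneg (d:ℝ)]
    · rw [hcast]
      exact (ZMod.intCast_eq_intCast_iff _ _ _).mp (hv1.trans hg1.symm) |>.dvd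
    · rw [hcast]
      exact (ZMod.intCast_eq_intCast_iff _ _ _).mp (hv2.trans hg2.symm) |>.dvd
    · rw [hcast]
      exact (ZMod.intCast_eq_intCast_iff _ _ _).mp (hv3.trans hg3.symm) |>.dvd
  · rintro ⟨hle, h1, h2, h3⟩
    rw [hcast] at h1 h2 h3
    -- d² divides Q c'
    have hv1' : ((c.1.val : ℕ) : ZMod (d^2)) = c.1 := ZMod.natCast_rightInverse c.1
    have hv2' : ((c.2.1.val : ℕ) : ZMod (d^2)) = c.2.1 := ZMod.natCast_rightInverse c.2.1
    have hv3' : ((c.2.2.val : ℕ) : ZMod (d^2)) = c.2.2 := ZMod.natCast_rightInverse c.2.2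
    have hcV : (d:ℤ)^2 ∣ ((c.1.val : ℤ)^2 + (c.2.1.val : ℤ)^2 + (c.2.2.val : ℤ)^2) := by
      rw [← hcast]
      apply (ZMod.intCast_zmod_eq_zero_iff_dvd _ _).mp
      push_cast
      rw [hv1', hv2', hv3']
      simpa [Vfin] using hc
    have hQdvd : (d:ℤ)^2 ∣ (t.1^2 + t.2.1^2 + t.2.2^2) := by
      have key : t.1^2 + t.2.1^2 + t.2.2^2 =
          ((t.1 - (c.1.val:ℤ))*(t.1 + (c.1.val:ℤ)) + (t.2.1 - (c.2.1.val:ℤ))*(t.2.1 + (c.2.1.val:ℤ))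
            + (t.2.2 - (c.2.2.val:ℤ))*(t.2.2 + (c.2.2.val:ℤ)))
          + ((c.1.val : ℤ)^2 + (c.2.1.val : ℤ)^2 + (c.2.2.val : ℤ)^2) := by ring
      rw [key]
      exact dvd_add (dvd_add (dvd_add (h1.mul_right _) (h2.mul_right _)) (h3.mul_right _)) hcV
    obtain ⟨k, hk⟩ := hQdvd
    have hk0 : 0 ≤ k := by nlinarith [sq_nonneg t.1, sq_nonneg t.2.1, sq_nonneg t.2.2]
    have hkR : (k:ℝ) ≤ N := by
      have hle' : ((t.1^2 + t.2.1^2 + t.2.2^2 : ℤ) : ℝ) ≤ N * (d:ℝ)^2 := by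
        rw [← hRsq]; push_cast; exact_mod_cast hle
      rw [hk] at hle'
      push_cast at hle'
      have hdpos : (0:ℝ) < (d:ℝ)^2 := by positivity
      nlinarith
    have hkfl : k ≤ (⌊N⌋₊ : ℤ) := by
      have : k.toNat ≤ ⌊N⌋₊ := Nat.le_floor (by rw [← Int.cast_natCast, Int.toNat_of_nonneg hk0]; exact hkR)
      omega
    have hQle : t.1^2 + t.2.1^2 + t.2.2^2 ≤ (⌊N⌋₊ : ℤ) * d^2 := by
      rw [hk]
      have : (0:ℤ) ≤ (d:ℤ)^2 := by positivity
      nlinarith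
    have hg1 : (t.1 : ZMod (d^2)) = c.1 := by
      rw [← hv1]
      exact (ZMod.intCast_eq_intCast_iff _ _ _).mpr
        (Int.ModEq.symm (Int.modEq_iff_dvd.mpr (by rw [hcast]; exact h1)))
    have hg2 : (t.2.1 : ZMod (d^2)) = c.2.1 := by
      rw [← hv2]
      exact (ZMod.intCast_eq_intCast_iff _ _ _).mpr
        (Int.ModEq.symm (Int.modEq_iff_dvd.mpr (by rw [hcast]; exact h2)))
    have hg3 : (t.2.2 : ZMod (d^2)) = c.2.2 := by
      rw [← hv3]
      exact (ZMod.intCast_eq_intCast_iff _ _ _).mpr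
        (Int.ModEq.symm (Int.modEq_iff_dvd.mpr (by rw [hcast]; exact h3)))
    simp only [Finset.mem_filter]
    refine ⟨⟨mem_boxI hQle, hQle, ⟨k, hk⟩⟩, ?_⟩
    rw [gmap, hg1, hg2, hg3]

theorem gauss_count_sublattice :
    ∃ C > (0:ℝ), ∀ d : ℕ, 0 < d → ∀ N : ℝ, (d : ℝ)^2 ≤ N →
      |(1 / (vcount d : ℝ)) * (∑ m ∈ Finset.range (⌊N⌋₊ + 1), (r3 (m * d^2) : ℝ)) -
          (4 * π / 3) * (N / (d : ℝ)^2) ^ ((3:ℝ)/2)| ≤ C * N / (d : ℝ)^2 := by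
  refine ⟨4000, by norm_num, ?_⟩
  intro d hd N hNd
  haveI : NeZero (d^2) := ⟨by positivity⟩
  have hdR : (0:ℝ) < d := by exact_mod_cast hd
  have hd2R : (0:ℝ) < (d:ℝ)^2 := by positivity
  have hN0 : 0 ≤ N := le_trans hd2R.le hNd
  set R : ℝ := Real.sqrt N * d with hRdef
  have hR0 : 0 ≤ R := by positivity
  have hRsq : R^2 = N * (d:ℝ)^2 := by rw [hRdef, mul_pow, Real.sq_sqrt hN0]
  set D : ℕ := d^2 with hDdef
  have hDpos : 0 < D := by positivity
  have hDR : ((D:ℕ):ℝ) = (d:ℝ)^2 := by rw [hDdef]; push_cast; ring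
  have hD3 : (0:ℝ) < ((D:ℕ):ℝ)^3 := by rw [hDR]; positivity
  set T := (boxI ((⌊N⌋₊ : ℤ) * d^2)).filter
    (fun t : ℤ × ℤ × ℤ => t.1^2 + t.2.1^2 + t.2.2^2 ≤ (⌊N⌋₊ : ℤ) * d^2 ∧
      ((d:ℤ)^2 ∣ t.1^2 + t.2.1^2 + t.2.2^2)) with hTdef
  have hsum : ∑ m ∈ Finset.range (⌊N⌋₊ + 1), r3 (m * d^2) = T.card := sum_r3_eq d hd N hN0
  have hfib : T.card = ∑ c ∈ Vfin d, (T.filter (fun t => gmap d t = c)).card := by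
    apply Finset.card_eq_sum_card_fiberwise
    intro t ht
    rw [hTdef, Finset.mem_coe, Finset.mem_filter] at ht
    obtain ⟨_, _, hdvd⟩ := ht
    simp only [Vfin, Finset.mem_coe, Finset.mem_filter, Finset.mem_univ, true_and, gmap]
    have h0 : ((t.1^2 + t.2.1^2 + t.2.2^2 : ℤ) : ZMod (d^2)) = 0 := by
      apply (ZMod.intCast_zmod_eq_zero_iff_dvd _ _).mpr
      rwa [show ((d^2:ℕ):ℤ) = (d:ℤ)^2 by push_cast; ring]
    push_cast at h0
    exact h0
  set B : ℝ := 2000 * (R^2 * D + ((D:ℕ):ℝ)^3) / ((D:ℕ):ℝ)^3 with hBdef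
  have key : ∀ c ∈ Vfin d,
      |((T.filter (fun t => gmap d t = c)).card : ℝ) - (4*π/3) * R^3 / ((D:ℕ):ℝ)^3| ≤ B := by
    intro c hc
    have h := coset_count D hDpos ((c.1.val : ℤ), (c.2.1.val : ℤ), (c.2.2.val : ℤ)) R hR0
      (T.filter (fun t => gmap d t = c))
      (fun t => fiber_iff d hd N hN0 c hc t)
    have heq : ((T.filter (fun t => gmap d t = c)).card : ℝ) - (4*π/3) * R^3 / ((D:ℕ):ℝ)^3
        = (((T.filter (fun t => gmap d t = c)).card : ℝ) * ((D:ℕ):ℝ)^3 - (4*π/3) * R^3)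
          / ((D:ℕ):ℝ)^3 := by
      field_simp
    rw [hBdef, heq, abs_div, abs_of_pos hD3]
    exact div_le_div_of_nonneg_right h hD3.le
  set v := (Vfin d).card with hvdef
  have hvcount : (vcount d : ℝ) = (v:ℝ) := by rw [vcount_eq]
  have hvpos : 0 < v := by rw [hvdef, ← vcount_eq]; exact vcount_pos d
  have hvR : (0:ℝ) < (v:ℝ) := by exact_mod_cast hvpos
  have hmain : (4*π/3) * (N / (d:ℝ)^2) ^ ((3:ℝ)/2) = (4*π/3) * R^3 / ((D:ℕ):ℝ)^3 := by
    have hx : N / (d:ℝ)^2 = (Real.sqrt N / d)^2 := by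
      rw [div_pow, Real.sq_sqrt hN0]
    rw [hx, ← Real.rpow_natCast (Real.sqrt N / d) 2, ← Real.rpow_mul (by positivity),
      show ((2:ℕ):ℝ) * (3/2) = ((3:ℕ):ℝ) by norm_num, Real.rpow_natCast, hDR, hRdef]
    field_simp
  have hexp : (1 / (vcount d : ℝ)) * (∑ m ∈ Finset.range (⌊N⌋₊ + 1), (r3 (m * d^2) : ℝ)) -
      (4 * π / 3) * (N / (d : ℝ)^2) ^ ((3:ℝ)/2)
      = (1/(v:ℝ)) * ∑ c ∈ Vfin d,
        (((T.filter (fun t => gmap d t = c)).card : ℝ) - (4*π/3) * R^3 / ((D:ℕ):ℝ)^3) := by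
    rw [Finset.sum_sub_distrib, Finset.sum_const, nsmul_eq_mul, hvcount, hmain]
    have hS : (∑ m ∈ Finset.range (⌊N⌋₊ + 1), (r3 (m * d^2) : ℝ))
        = ∑ c ∈ Vfin d, ((T.filter (fun t => gmap d t = c)).card : ℝ) := by
      rw [← Nat.cast_sum, ← Nat.cast_sum]
      exact_mod_cast congrArg (Nat.cast (R := ℝ)) (hsum.trans hfib)
    rw [hS]
    field_simp
    rw [← hvdef]; ring
  rw [hexp, abs_mul, abs_of_pos (by positivity : (0:ℝ) < 1/(v:ℝ))]
  have habs : |∑ c ∈ Vfin d,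
      (((T.filter (fun t => gmap d t = c)).card : ℝ) - (4*π/3) * R^3 / ((D:ℕ):ℝ)^3)| ≤ v * B := by
    refine (Finset.abs_sum_le_sum_abs _ _).trans ?_
    rw [show (v:ℝ) * B = (Vfin d).card • B by rw [hvdef, nsmul_eq_mul]]
    exact Finset.sum_le_card_nsmul _ _ B key
  have hBle : B ≤ 4000 * N / (d:ℝ)^2 := by
    rw [hBdef, hRsq, hDR]
    rw [div_le_div_iff₀ (by positivity) hd2R]
    nlinarith [mul_le_mul_of_nonneg_right hNd (show (0:ℝ) ≤ (d:ℝ)^6 by positivity), hd2R,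
      pow_pos hdR 6, pow_pos hdR 8]
  calc (1/(v:ℝ)) * |∑ c ∈ Vfin d,
      (((T.filter (fun t => gmap d t = c)).card : ℝ) - (4*π/3) * R^3 / ((D:ℕ):ℝ)^3)|
      ≤ (1/(v:ℝ)) * ((v:ℝ) * B) := by
        exact mul_le_mul_of_nonneg_left habs (by positivity)
    _ = B := by field_simp
    _ ≤ 4000 * N / (d:ℝ)^2 := hBle
end
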